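/- arXiv:1109.1763 — 4 statements merged into one kernel-verified Lean document; each statement's English description precedes it below -/
import Mathlib

section
/- Let n ≥ 3 and let F = {⟨B_1,S_1⟩, …, ⟨B_m,S_m⟩} be a quantum probability assignment on ℂⁿ. Then F is consistent if and only if every subset G ⊆ F of size at most n² − n + 1 is consistent. -/
open Matrix ComplexOrder

/-- The rank-one orthogonal projection `|v⟩⟨v|` onto the line spanned by `v`. -/
def proj {n : ℕ} (v : Fin n → ℂ) : Matrix (Fin n) (Fin n) ℂ :=
  Matrix.vecMulVec v (star v)

/-- One member `⟨B_k, S_k⟩` of a quantum probability assignment on `ℂⁿ`: an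
orthonormal basis `vec` of `ℂⁿ` (whose rank-one projections form the measurement)
together with a probability distribution `prob` on the `n` outcomes. -/
structure Meas (n : ℕ) where
  vec : Fin n → (Fin n → ℂ)
  ortho : ∀ i j, dotProduct (star (vec i)) (vec j) = if i = j then 1 else 0
  prob : Fin n → ℝ
  prob_nonneg : ∀ i, 0 ≤ prob i
  prob_sum : ∑ i, prob i = 1

/-- The sub-family of the QPA `F` indexed by `G` is consistent: some density matrix
(positive semidefinite, trace one) reproduces all the assigned probabilities. -/
def ConsistentOn {n m : ℕ} (F : Fin m → Meas n) (G : Finset (Fin m)) : Prop :=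
  ∃ ρ : Matrix (Fin n) (Fin n) ℂ, ρ.PosSemidef ∧ ρ.trace = 1 ∧
    ∀ k ∈ G, ∀ i, (ρ * proj ((F k).vec i)).trace = ((F k).prob i : ℂ)

namespace QPA

variable {n m : ℕ}

lemma proj_herm (v : Fin n → ℂ) : (proj v)ᴴ = proj v := by
  ext i j
  simp [proj, conjTranspose_apply, vecMulVec_apply, mul_comm]

lemma mul_vecMulVec (A : Matrix (Fin n) (Fin n) ℂ) (v w : Fin n → ℂ) :
    A * vecMulVec v w = vecMulVec (A *ᵥ v) w := by
  ext i j
  simp [vecMulVec_apply, mul_apply, mulVec, dotProduct, Finset.sum_mul, mul_assoc]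

lemma vecMulVec_mul (v w : Fin n → ℂ) (A : Matrix (Fin n) (Fin n) ℂ) :
    vecMulVec v w * A = vecMulVec v (w ᵥ* A) := by
  ext i j
  simp only [vecMulVec_apply, mul_apply, vecMul, dotProduct, Finset.mul_sum]
  exact Finset.sum_congr rfl fun c _ => by ring

lemma vecMulVec_smul_left (c : ℂ) (v w : Fin n → ℂ) :
    vecMulVec (c • v) w = c • vecMulVec v w := by
  ext i j
  simp [vecMulVec_apply, mul_assoc]

lemma mulVec_proj (v w : Fin n → ℂ) : proj v *ᵥ w = (star v ⬝ᵥ w) • v := by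
  ext a
  simp only [proj, mulVec, vecMulVec_apply, dotProduct, Pi.smul_apply, smul_eq_mul,
    Finset.sum_mul, Finset.mul_sum]
  exact Finset.sum_congr rfl fun b _ => by simp [mul_comm, mul_left_comm, mul_assoc]

lemma trace_vecMulVec (v w : Fin n → ℂ) : (vecMulVec v w).trace = w ⬝ᵥ v := by
  simp [Matrix.trace, Matrix.diag, vecMulVec_apply, dotProduct, mul_comm]

lemma vecMul_herm {A : Matrix (Fin n) (Fin n) ℂ} (hA : Aᴴ = A) (v : Fin n → ℂ) :
    (star v) ᵥ* A = star (A *ᵥ v) := by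
  rw [star_mulVec, hA]

lemma trace_mul_real {A B : Matrix (Fin n) (Fin n) ℂ} (hA : Aᴴ = A) (hB : Bᴴ = B) :
    star ((A * B).trace) = (A * B).trace := by
  calc star ((A * B).trace) = ((A * B)ᴴ).trace := by rw [trace_conjTranspose]
  _ = (Bᴴ * Aᴴ).trace := by rw [conjTranspose_mul]
  _ = (A * B).trace := by rw [hA, hB, trace_mul_comm]

section MeasLemmas

variable (M : Meas n)

lemma sum_mulVec' {ι : Type*} (s : Finset ι) (f : ι → Matrix (Fin n) (Fin n) ℂ)
    (v : Fin n → ℂ) : (∑ i ∈ s, f i) *ᵥ v = ∑ i ∈ s, f i *ᵥ v := by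
  ext a
  simp only [mulVec, dotProduct, Finset.sum_apply, Matrix.sum_apply, Finset.sum_mul]
  rw [Finset.sum_comm]

lemma proj_mul_proj (i j : Fin n) :
    proj (M.vec i) * proj (M.vec j) = if i = j then proj (M.vec j) else 0 := by
  have h1 : proj (M.vec i) * proj (M.vec j)
      = vecMulVec (proj (M.vec i) *ᵥ M.vec j) (star (M.vec j)) :=
    mul_vecMulVec _ _ _
  rw [h1, mulVec_proj, M.ortho i j, vecMulVec_smul_left]
  split <;> simp_all [proj]

/-- The matrix whose columns are the basis vectors. -/
def basisMat : Matrix (Fin n) (Fin n) ℂ := Matrix.of fun a i => M.vec i a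

lemma basisMat_conj_mul : (basisMat M)ᴴ * basisMat M = 1 := by
  ext i j
  rw [mul_apply, one_apply, ← M.ortho i j]
  simp [basisMat, conjTranspose_apply, dotProduct]

lemma basisMat_mul_conj : basisMat M * (basisMat M)ᴴ = 1 :=
  mul_eq_one_comm.mp (basisMat_conj_mul M)

lemma eq_of_mulVec_basis {A B : Matrix (Fin n) (Fin n) ℂ}
    (h : ∀ i, A *ᵥ M.vec i = B *ᵥ M.vec i) : A = B := by
  have h2 : A * basisMat M = B * basisMat M := by
    ext a i
    have := congrFun (h i) a
    simpa [mul_apply, mulVec, dotProduct, basisMat] using this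
  calc A = A * (basisMat M * (basisMat M)ᴴ) := by rw [basisMat_mul_conj M, mul_one]
  _ = A * basisMat M * (basisMat M)ᴴ := by rw [mul_assoc]
  _ = B * basisMat M * (basisMat M)ᴴ := by rw [h2]
  _ = B * (basisMat M * (basisMat M)ᴴ) := by rw [mul_assoc]
  _ = B := by rw [basisMat_mul_conj M, mul_one]

lemma mulVec_proj_same (i : Fin n) : proj (M.vec i) *ᵥ M.vec i = M.vec i := by
  rw [mulVec_proj, M.ortho i i]
  simp

lemma mulVec_proj_ne {i j : Fin n} (hij : i ≠ j) : proj (M.vec i) *ᵥ M.vec j = 0 := by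
  rw [mulVec_proj, M.ortho i j]
  simp [hij]

lemma sum_proj : ∑ i, proj (M.vec i) = 1 := by
  apply eq_of_mulVec_basis M
  intro i
  rw [sum_mulVec', Matrix.one_mulVec]
  rw [Finset.sum_eq_single i]
  · exact mulVec_proj_same M i
  · intro j _ hj; exact mulVec_proj_ne M hj
  · intro h; exact absurd (Finset.mem_univ i) h

lemma trace_proj (i : Fin n) : (proj (M.vec i)).trace = 1 := by
  rw [proj, trace_vecMulVec, M.ortho i i]
  simp

end MeasLemmas

lemma psd_real_smul {ρ : Matrix (Fin n) (Fin n) ℂ} (h : ρ.PosSemidef) {a : ℝ} (ha : 0 ≤ a) :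
    (a • ρ).PosSemidef := by
  have hc : a • ρ = (a : ℂ) • ρ := by
    ext i j
    simp [Matrix.smul_apply, Complex.real_smul]
  rw [hc]
  constructor
  · unfold Matrix.IsHermitian
    rw [conjTranspose_smul, h.1.eq]
    congr 1
    simp
  · intro x
    have h0 : (0:ℂ) ≤ (a:ℂ) := by
      rw [Complex.le_def]
      simp [ha]
    exact (h.smul h0).2 x

section Herm

variable (n) in
noncomputable def herm : Submodule ℝ (Matrix (Fin n) (Fin n) ℂ) where
  carrier := {A | Aᴴ = A}
  add_mem' := by
    intro a b ha hb
    simp only [Set.mem_setOf_eq] at *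
    rw [conjTranspose_add, ha, hb]
  zero_mem' := by simp
  smul_mem' := by
    intro c A hA
    simp only [Set.mem_setOf_eq] at *
    rw [conjTranspose_smul, hA, star_trivial]

variable (n) in
noncomputable def skewh : Submodule ℝ (Matrix (Fin n) (Fin n) ℂ) where
  carrier := {A | Aᴴ = -A}
  add_mem' := by
    intro a b ha hb
    simp only [Set.mem_setOf_eq] at *
    rw [conjTranspose_add, ha, hb, neg_add]
  zero_mem' := by simp
  smul_mem' := by
    intro c A hA
    simp only [Set.mem_setOf_eq] at *
    rw [conjTranspose_smul, hA, star_trivial, smul_neg]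

lemma mem_herm_iff {A : Matrix (Fin n) (Fin n) ℂ} : A ∈ herm n ↔ Aᴴ = A := Iff.rfl

lemma isCompl_herm_skewh : IsCompl (herm n) (skewh n) := by
  constructor
  · rw [Submodule.disjoint_def]
    intro A hA hA'
    have h1 : A = -A := hA.symm.trans hA'
    have h2 : A + A = 0 := by nth_rewrite 2 [h1]; simp
    have h3 : (2:ℝ) • A = 0 := by rw [two_smul]; exact h2
    have := smul_eq_zero.mp h3
    simpa using this
  · rw [codisjoint_iff, eq_top_iff]
    intro A _
    have hmem : (2⁻¹:ℝ) • (A + Aᴴ) ∈ herm n := by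
      show ((2⁻¹:ℝ) • (A + Aᴴ))ᴴ = _
      rw [conjTranspose_smul, conjTranspose_add, conjTranspose_conjTranspose, star_trivial,
        add_comm]
    have hmem' : (2⁻¹:ℝ) • (A - Aᴴ) ∈ skewh n := by
      show ((2⁻¹:ℝ) • (A - Aᴴ))ᴴ = _
      rw [conjTranspose_smul, conjTranspose_sub, conjTranspose_conjTranspose, star_trivial,
        ← smul_neg, neg_sub]
    rw [Submodule.mem_sup]
    refine ⟨_, hmem, _, hmem', ?_⟩
    rw [← smul_add]
    have : A + Aᴴ + (A - Aᴴ) = (2:ℝ) • A := by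
      rw [two_smul]; abel
    rw [this, smul_smul]
    norm_num

variable (n) in
noncomputable def skewhEquiv : (skewh n) ≃ₗ[ℝ] (herm n) where
  toFun A := ⟨Complex.I • (A : Matrix (Fin n) (Fin n) ℂ), by
    have hA : (A : Matrix (Fin n) (Fin n) ℂ)ᴴ = -(A : Matrix (Fin n) (Fin n) ℂ) := A.2
    show (Complex.I • (A : Matrix (Fin n) (Fin n) ℂ))ᴴ = _
    rw [conjTranspose_smul, hA]
    simp⟩
  map_add' := by
    intro A B
    ext : 1
    simp only [Submodule.coe_add, smul_add]
  map_smul' := by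
    intro r A
    ext : 1
    simp only [Submodule.coe_smul, SetLike.val_smul, RingHom.id_apply]
    exact smul_comm _ _ _
  invFun B := ⟨(-Complex.I) • (B : Matrix (Fin n) (Fin n) ℂ), by
    have hB : (B : Matrix (Fin n) (Fin n) ℂ)ᴴ = (B : Matrix (Fin n) (Fin n) ℂ) := B.2
    show ((-Complex.I) • (B : Matrix (Fin n) (Fin n) ℂ))ᴴ = _
    rw [conjTranspose_smul, hB]
    simp⟩
  left_inv := by
    intro A; ext : 1
    show (-Complex.I) • (Complex.I • (A : Matrix (Fin n) (Fin n) ℂ)) = _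
    rw [smul_smul]
    simp
  right_inv := by
    intro B; ext : 1
    show Complex.I • ((-Complex.I) • (B : Matrix (Fin n) (Fin n) ℂ)) = _
    rw [smul_smul]
    simp

lemma finrank_herm : Module.finrank ℝ (herm n) = n ^ 2 := by
  have h1 : Module.finrank ℝ (herm n) + Module.finrank ℝ (skewh n)
      = Module.finrank ℝ (Matrix (Fin n) (Fin n) ℂ) :=
    Submodule.finrank_add_eq_of_isCompl isCompl_herm_skewh
  have h2 : Module.finrank ℝ (skewh n) = Module.finrank ℝ (herm n) :=
    (skewhEquiv n).finrank_eq
  have h3 : Module.finrank ℝ (Matrix (Fin n) (Fin n) ℂ) = n * n * 2 := by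
    rw [Module.finrank_matrix]
    simp [Complex.finrank_real_complex]
  have h4 : n ^ 2 = n * n := sq n
  omega

end Herm

section Perp

noncomputable def dualRestrict (S : Submodule ℝ (Matrix (Fin n) (Fin n) ℂ)) :
    Matrix (Fin n) (Fin n) ℂ →ₗ[ℝ] (S →ₗ[ℝ] ℝ) where
  toFun A :=
    { toFun := fun s => ((Aᴴ * (s : Matrix (Fin n) (Fin n) ℂ)).trace).re
      map_add' := by
        intro s t
        simp [mul_add, trace_add]
      map_smul' := by
        intro r s
        simp [mul_smul_comm, trace_smul, Complex.real_smul] }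
  map_add' := by
    intro A B
    ext s
    simp [conjTranspose_add, add_mul, trace_add]
  map_smul' := by
    intro r A
    ext s
    simp [conjTranspose_smul, Matrix.smul_mul, trace_smul, Complex.real_smul]

lemma exists_perp (S : Submodule ℝ (Matrix (Fin n) (Fin n) ℂ)) (hS : Module.finrank ℝ S < n ^ 2) :
    ∃ Z : Matrix (Fin n) (Fin n) ℂ, Zᴴ = Z ∧ Z ≠ 0 ∧
      ∀ B ∈ S, ((Z * B).trace).re = 0 := by
  set T := (dualRestrict S).comp (herm n).subtype with hT
  have hnotinj : ¬ Function.Injective T := by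
    intro hinj
    have := LinearMap.finrank_le_finrank_of_injective hinj
    rw [finrank_herm, Module.finrank_linearMap_self] at this
    omega
  rw [← LinearMap.ker_eq_bot] at hnotinj
  obtain ⟨Z', hZmem, hZne⟩ := Submodule.exists_mem_ne_zero_of_ne_bot hnotinj
  refine ⟨(Z' : Matrix (Fin n) (Fin n) ℂ), Z'.2, by simpa using hZne, ?_⟩
  intro B hB
  have h0 : T Z' = 0 := hZmem
  have := congrFun (congrArg (fun f => f.toFun) h0) ⟨B, hB⟩
  simp only [hT, LinearMap.comp_apply, Submodule.subtype_apply] at this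
  have h2 : (((Z' : Matrix (Fin n) (Fin n) ℂ))ᴴ * B).trace.re = 0 := this
  rwa [Z'.2] at h2

lemma eq_zero_of_trace_conj_self {A : Matrix (Fin n) (Fin n) ℂ}
    (h : ((Aᴴ * A).trace).re = 0) : A = 0 := by
  have key : (Aᴴ * A).trace = ((∑ j, ∑ i, Complex.normSq (A i j) : ℝ) : ℂ) := by
    push_cast
    simp only [Matrix.trace, Matrix.diag_apply, mul_apply, conjTranspose_apply]
    refine Finset.sum_congr rfl fun j _ => Finset.sum_congr rfl fun i _ => ?_
    rw [mul_comm]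
    rw [show star (A i j) = (starRingEnd ℂ) (A i j) from rfl]
    rw [Complex.mul_conj]
  rw [key, Complex.ofReal_re] at h
  have hz : ∀ j ∈ Finset.univ, ∀ i ∈ Finset.univ, Complex.normSq (A i j) = (0:ℝ) := by
    intro j hj
    have hsum := (Finset.sum_eq_zero_iff_of_nonneg (fun j _ => Finset.sum_nonneg
      (fun i _ => Complex.normSq_nonneg (A i j)))).mp h j hj
    intro i hi
    exact (Finset.sum_eq_zero_iff_of_nonneg (fun i _ => Complex.normSq_nonneg (A i j))).mp
      hsum i hi
  ext i j
  simpa using Complex.normSq_eq_zero.mp (hz j (Finset.mem_univ j) i (Finset.mem_univ i))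

end Perp

section Glue

variable {F : Fin m → Meas n}

lemma convex_density_sat (F : Fin m → Meas n) (G : Finset (Fin m)) :
    Convex ℝ {ρ : Matrix (Fin n) (Fin n) ℂ | ρ.PosSemidef ∧ ρ.trace = 1 ∧
      ∀ k ∈ G, ∀ i, (ρ * proj ((F k).vec i)).trace = ((F k).prob i : ℂ)} := by
  rintro ρ ⟨h1, h2, h3⟩ σ ⟨g1, g2, g3⟩ a b ha hb hab
  have habC : (a : ℂ) + (b : ℂ) = 1 := by exact_mod_cast hab
  refine ⟨(psd_real_smul h1 ha).add (psd_real_smul g1 hb), ?_, ?_⟩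
  · rw [trace_add, trace_smul, trace_smul, h2, g2, Complex.real_smul, Complex.real_smul,
      mul_one, mul_one, habC]
  · intro k hk i
    rw [add_mul, Matrix.smul_mul, Matrix.smul_mul, trace_add, trace_smul, trace_smul,
      h3 k hk i, g3 k hk i, Complex.real_smul, Complex.real_smul, ← add_mul, habC, one_mul]

lemma radon_glue (F : Fin m → Meas n) (K : Finset (Fin m))
    (x : {k // k ∈ K} → Matrix (Fin n) (Fin n) ℂ)
    (hdep : ¬ AffineIndependent ℝ x)
    (hx : ∀ j : {k // k ∈ K}, (x j).PosSemidef ∧ (x j).trace = 1 ∧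
      ∀ k ∈ K, k ≠ (j : Fin m) → ∀ i, ((x j) * proj ((F k).vec i)).trace = ((F k).prob i : ℂ)) :
    ConsistentOn F K := by
  classical
  obtain ⟨I, p, hp⟩ := Convex.radon_partition hdep
  obtain ⟨hpI, hpIc⟩ := hp
  have hbase : ∀ (J : Set {k // k ∈ K}), p ∈ convexHull ℝ (x '' J) →
      p.PosSemidef ∧ p.trace = 1 := by
    intro J hpJ
    have hsub : x '' J ⊆ {ρ : Matrix (Fin n) (Fin n) ℂ | ρ.PosSemidef ∧ ρ.trace = 1 ∧
        ∀ k ∈ (∅ : Finset (Fin m)), ∀ i,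
          (ρ * proj ((F k).vec i)).trace = ((F k).prob i : ℂ)} := by
      rintro _ ⟨j, _, rfl⟩
      exact ⟨(hx j).1, (hx j).2.1, by simp⟩
    have := convexHull_min hsub (convex_density_sat F ∅) hpJ
    exact ⟨this.1, this.2.1⟩
  have hsat : ∀ k ∈ K, ∀ i, (p * proj ((F k).vec i)).trace = ((F k).prob i : ℂ) := by
    intro k hk
    have main : ∀ (J : Set {k // k ∈ K}), (⟨k, hk⟩ : {k // k ∈ K}) ∉ J →
        p ∈ convexHull ℝ (x '' J) →
        ∀ i, (p * proj ((F k).vec i)).trace = ((F k).prob i : ℂ) := by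
      intro J hkJ hpJ
      have hsub : x '' J ⊆ {ρ : Matrix (Fin n) (Fin n) ℂ | ρ.PosSemidef ∧ ρ.trace = 1 ∧
          ∀ k' ∈ ({k} : Finset (Fin m)), ∀ i,
            (ρ * proj ((F k').vec i)).trace = ((F k').prob i : ℂ)} := by
        rintro _ ⟨j, hjJ, rfl⟩
        refine ⟨(hx j).1, (hx j).2.1, ?_⟩
        intro k' hk' i
        rw [Finset.mem_singleton] at hk'
        rw [hk']
        have hne : k ≠ (j : Fin m) := by
          intro h
          apply hkJ
          have : (⟨k, hk⟩ : {k // k ∈ K}) = j := Subtype.ext h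
          rwa [this]
        exact (hx j).2.2 k hk hne i
      have := convexHull_min hsub (convex_density_sat F {k}) hpJ
      exact fun i => this.2.2 k (Finset.mem_singleton_self k) i
    by_cases hI : (⟨k, hk⟩ : {k // k ∈ K}) ∈ I
    · exact main Iᶜ (by simpa using hI) hpIc
    · exact main I hI hpI
  exact ⟨p, (hbase I hpI).1, (hbase I hpI).2, hsat⟩

end Glue

section Vk

lemma complex_eq_zero_of_real {z : ℂ} (h1 : star z = z) (h2 : z.re = 0) : z = 0 := by
  have him : z.im = 0 := Complex.conj_eq_iff_im.mp h1
  exact Complex.ext h2 him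

noncomputable def measT (M : Meas n) : (herm n) →ₗ[ℝ] (Fin n → ℝ) where
  toFun A := fun i => (((A : Matrix (Fin n) (Fin n) ℂ) * proj (M.vec i)).trace).re
  map_add' := by
    intro A B
    funext i
    simp [Submodule.coe_add, add_mul, trace_add]
  map_smul' := by
    intro r A
    funext i
    simp [Submodule.coe_smul, Matrix.smul_mul, trace_smul, Complex.real_smul]

lemma measT_surjective (M : Meas n) : Function.Surjective (measT M) := by
  intro c
  have hmem : (∑ i, (c i : ℂ) • proj (M.vec i)) ∈ herm n := by
    show (∑ i, (c i : ℂ) • proj (M.vec i))ᴴ = _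
    rw [conjTranspose_sum]
    refine Finset.sum_congr rfl fun i _ => ?_
    rw [conjTranspose_smul, proj_herm]
    congr 1
    simp [Complex.star_def]
  refine ⟨⟨_, hmem⟩, ?_⟩
  funext j
  show ((∑ i, (c i : ℂ) • proj (M.vec i)) * proj (M.vec j)).trace.re = c j
  rw [Finset.sum_mul]
  have : ∀ i, ((c i : ℂ) • proj (M.vec i)) * proj (M.vec j)
      = if i = j then (c i : ℂ) • proj (M.vec j) else 0 := by
    intro i
    rw [Matrix.smul_mul, proj_mul_proj]
    split <;> simp
  simp_rw [this]
  rw [Finset.sum_ite_eq' Finset.univ j (fun i => (c i : ℂ) • proj (M.vec j))]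
  simp [trace_smul, trace_proj]

noncomputable def constrSub (M : Meas n) : Submodule ℝ (Matrix (Fin n) (Fin n) ℂ) :=
  Submodule.map (herm n).subtype (LinearMap.ker (measT M))

lemma finrank_constrSub (M : Meas n) : Module.finrank ℝ (constrSub M) = n ^ 2 - n := by
  have h1 : Module.finrank ℝ (constrSub M)
      = Module.finrank ℝ (LinearMap.ker (measT M)) :=
    Submodule.finrank_map_subtype_eq (herm n) _
  have h2 := LinearMap.finrank_range_add_finrank_ker (measT M)
  rw [LinearMap.range_eq_top.mpr (measT_surjective M)] at h2
  have h3 : Module.finrank ℝ (⊤ : Submodule ℝ (Fin n → ℝ)) = n := by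
    simpa using finrank_top ℝ (Fin n → ℝ)
  rw [finrank_herm, h3] at h2
  omega

lemma mem_constrSub {M : Meas n} {A : Matrix (Fin n) (Fin n) ℂ} :
    A ∈ constrSub M ↔ Aᴴ = A ∧ ∀ i, (A * proj (M.vec i)).trace = 0 := by
  constructor
  · rintro ⟨⟨B, hB⟩, hker, rfl⟩
    refine ⟨hB, fun i => ?_⟩
    have hre : ((B * proj (M.vec i)).trace).re = 0 := by
      have := congrFun (LinearMap.mem_ker.mp hker) i
      exact this
    exact complex_eq_zero_of_real (trace_mul_real hB (proj_herm _)) hre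
  · rintro ⟨hA, hc⟩
    refine ⟨⟨A, hA⟩, ?_, rfl⟩
    rw [SetLike.mem_coe, LinearMap.mem_ker]
    funext i
    show ((A * proj (M.vec i)).trace).re = 0
    rw [hc i]
    simp

end Vk

section Block

variable (M : Meas n) (S₀ : Finset (Fin n))

noncomputable def blockP : Matrix (Fin n) (Fin n) ℂ := ∑ i ∈ S₀, proj (M.vec i)

lemma blockP_herm : (blockP M S₀)ᴴ = blockP M S₀ := by
  rw [blockP, conjTranspose_sum]
  exact Finset.sum_congr rfl fun i _ => proj_herm _

lemma blockP_idem : blockP M S₀ * blockP M S₀ = blockP M S₀ := by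
  rw [blockP, Finset.sum_mul]
  have : ∀ i ∈ S₀, proj (M.vec i) * ∑ j ∈ S₀, proj (M.vec j) = proj (M.vec i) := by
    intro i hi
    rw [Finset.mul_sum]
    have h1 : ∀ j, proj (M.vec i) * proj (M.vec j) = if j = i then proj (M.vec i) else 0 := by
      intro j
      rw [proj_mul_proj]
      by_cases h : j = i
      · subst h; simp
      · have h' : i ≠ j := fun hh => h hh.symm
        simp [h, h']
    simp_rw [h1]
    rw [Finset.sum_ite_eq' S₀ i (fun _ => proj (M.vec i))]
    simp [hi]
  exact Finset.sum_congr rfl this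

lemma blockP_trace : (blockP M S₀).trace = (S₀.card : ℂ) := by
  rw [blockP, trace_sum]
  rw [Finset.sum_congr rfl (fun i _ => trace_proj M i)]
  simp

lemma blockP_mulVec_mem {i : Fin n} (hi : i ∈ S₀) : blockP M S₀ *ᵥ M.vec i = M.vec i := by
  rw [blockP, sum_mulVec']
  have h1 : ∀ j, proj (M.vec j) *ᵥ M.vec i = if j = i then M.vec i else 0 := by
    intro j
    by_cases h : j = i
    · subst h; simp [mulVec_proj_same M]
    · simp [h, mulVec_proj_ne M h]
  simp_rw [h1]
  rw [Finset.sum_ite_eq' S₀ i (fun _ => M.vec i)]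
  simp [hi]

lemma blockP_mulVec_not_mem {i : Fin n} (hi : i ∉ S₀) : blockP M S₀ *ᵥ M.vec i = 0 := by
  rw [blockP, sum_mulVec']
  refine Finset.sum_eq_zero fun j hj => ?_
  have : j ≠ i := fun h => hi (h ▸ hj)
  exact mulVec_proj_ne M this

noncomputable def blockQ : Matrix (Fin n) (Fin n) ℂ := 1 - blockP M S₀

lemma blockQ_herm : (blockQ M S₀)ᴴ = blockQ M S₀ := by
  rw [blockQ, conjTranspose_sub, blockP_herm]
  simp

lemma blockP_mul_blockQ : blockP M S₀ * blockQ M S₀ = 0 := by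
  rw [blockQ, mul_sub, mul_one, blockP_idem, sub_self]

lemma blockQ_mul_blockP : blockQ M S₀ * blockP M S₀ = 0 := by
  rw [blockQ, sub_mul, one_mul, blockP_idem, sub_self]

lemma blockQ_idem : blockQ M S₀ * blockQ M S₀ = blockQ M S₀ := by
  rw [blockQ, mul_sub, mul_one, sub_mul, one_mul, blockP_idem]
  abel

lemma blockQ_mulVec_mem {i : Fin n} (hi : i ∉ S₀) : blockQ M S₀ *ᵥ M.vec i = M.vec i := by
  rw [blockQ, sub_mulVec, one_mulVec, blockP_mulVec_not_mem M S₀ hi, sub_zero]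

lemma blockQ_mulVec_not_mem {i : Fin n} (hi : i ∈ S₀) : blockQ M S₀ *ᵥ M.vec i = 0 := by
  rw [blockQ, sub_mulVec, one_mulVec, blockP_mulVec_mem M S₀ hi, sub_self]

/-- The space of matrices supported in the off-diagonal block. -/
noncomputable def offBlock : Submodule ℝ (Matrix (Fin n) (Fin n) ℂ) where
  carrier := {B | blockP M S₀ * B * blockQ M S₀ = B}
  add_mem' := by
    intro a b ha hb
    simp only [Set.mem_setOf_eq] at *
    rw [mul_add, add_mul, ha, hb]
  zero_mem' := by simp
  smul_mem' := by
    intro c A hA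
    simp only [Set.mem_setOf_eq] at *
    rw [Matrix.mul_smul, Matrix.smul_mul, hA]

end Block

section Theta

variable (M : Meas n) (S₀ : Finset (Fin n))

noncomputable def reTraceL : (herm n) →ₗ[ℝ] ℝ where
  toFun A := ((A : Matrix (Fin n) (Fin n) ℂ).trace).re
  map_add' := by intro A B; simp [Submodule.coe_add, trace_add]
  map_smul' := by intro r A; simp [Submodule.coe_smul, trace_smul, Complex.real_smul]

noncomputable def reTracePL : (herm n) →ₗ[ℝ] ℝ where
  toFun A := (((A : Matrix (Fin n) (Fin n) ℂ) * blockP M S₀).trace).re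
  map_add' := by intro A B; simp [Submodule.coe_add, add_mul, trace_add]
  map_smul' := by
    intro r A
    simp [Submodule.coe_smul, Matrix.smul_mul, trace_smul, Complex.real_smul]

noncomputable def obPartL : (herm n) →ₗ[ℝ] (offBlock M S₀) where
  toFun A := ⟨blockP M S₀ * (A : Matrix (Fin n) (Fin n) ℂ) * blockQ M S₀, by
    show blockP M S₀ * (blockP M S₀ * (A : Matrix (Fin n) (Fin n) ℂ) * blockQ M S₀) *
      blockQ M S₀ = _
    simp only [← mul_assoc]
    rw [blockP_idem]
    rw [mul_assoc (blockP M S₀ * (A : Matrix (Fin n) (Fin n) ℂ)) (blockQ M S₀) (blockQ M S₀),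
      blockQ_idem]⟩
  map_add' := by
    intro A B
    ext : 1
    show blockP M S₀ * ((A : Matrix (Fin n) (Fin n) ℂ) + (B : Matrix (Fin n) (Fin n) ℂ)) *
      blockQ M S₀ = _
    rw [mul_add, add_mul]
    rfl
  map_smul' := by
    intro r A
    ext : 1
    show blockP M S₀ * (r • (A : Matrix (Fin n) (Fin n) ℂ)) * blockQ M S₀ = _
    rw [Matrix.mul_smul, Matrix.smul_mul]
    rfl

noncomputable def theta : (herm n) →ₗ[ℝ] ℝ × ℝ × (offBlock M S₀) :=
  LinearMap.prod (reTraceL) (LinearMap.prod (reTracePL M S₀) (obPartL M S₀))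

lemma offBlock_facts {C : Matrix (Fin n) (Fin n) ℂ}
    (hC : blockP M S₀ * C * blockQ M S₀ = C) :
    C.trace = 0 ∧ (C * blockP M S₀).trace = 0 ∧ (Cᴴ).trace = 0 ∧
      (Cᴴ * blockP M S₀).trace = 0 ∧ blockP M S₀ * Cᴴ * blockQ M S₀ = 0 ∧
      Cᴴ = blockQ M S₀ * Cᴴ * blockP M S₀ := by
  have hCH : Cᴴ = blockQ M S₀ * Cᴴ * blockP M S₀ := by
    conv_lhs => rw [← hC]
    rw [conjTranspose_mul, conjTranspose_mul, blockQ_herm, blockP_herm, mul_assoc]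
  have hCP : C * blockP M S₀ = 0 := by
    conv_lhs => rw [← hC]
    rw [mul_assoc, blockQ_mul_blockP, mul_zero]
  have htrC : C.trace = 0 := by
    conv_lhs => rw [← hC]
    rw [trace_mul_comm, ← mul_assoc, blockQ_mul_blockP, zero_mul, trace_zero]
  have hCHP : Cᴴ * blockP M S₀ = Cᴴ := by
    conv_lhs => rw [hCH]
    rw [mul_assoc, blockP_idem, ← hCH]
  have htrCH : (Cᴴ).trace = 0 := by
    rw [trace_conjTranspose, htrC, star_zero]
  refine ⟨htrC, by rw [hCP, trace_zero], htrCH, by rw [hCHP, htrCH], ?_, hCH⟩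
  · conv_lhs => rw [hCH]
    calc blockP M S₀ * (blockQ M S₀ * Cᴴ * blockP M S₀) * blockQ M S₀
        = (blockP M S₀ * blockQ M S₀) * Cᴴ * (blockP M S₀ * blockQ M S₀) := by
          simp only [mul_assoc]
      _ = 0 := by rw [blockP_mul_blockQ, zero_mul, mul_zero]

lemma theta_surjective (h1 : S₀.Nonempty) (h2 : S₀ ≠ Finset.univ) :
    Function.Surjective (theta M S₀) := by
  rintro ⟨a, b, C, hC⟩
  have hfacts := offBlock_facts M S₀ hC
  obtain ⟨htrC, htrCP, htrCH, htrCHP, hPCHQ, hCH⟩ := hfacts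
  have hs : (0:ℝ) < (S₀.card : ℝ) := by
    have := Finset.card_pos.mpr h1
    exact_mod_cast this
  have hcardlt : S₀.card < n := by
    have hss : S₀ ⊂ Finset.univ := Finset.ssubset_univ_iff.mpr h2
    simpa using Finset.card_lt_card hss
  have hs2 : (0:ℝ) < (n : ℝ) - (S₀.card : ℝ) := by
    have : (S₀.card : ℝ) < (n : ℝ) := by exact_mod_cast hcardlt
    linarith
  set α : ℝ := b / (S₀.card : ℝ) with hα
  set β : ℝ := (a - b) / ((n : ℝ) - (S₀.card : ℝ)) with hβ
  set A : Matrix (Fin n) (Fin n) ℂ := α • blockP M S₀ + β • blockQ M S₀ + (C + Cᴴ) with hA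
  have hherm : A ∈ herm n := by
    show Aᴴ = A
    rw [hA, conjTranspose_add, conjTranspose_add, conjTranspose_smul, conjTranspose_smul,
      blockP_herm, blockQ_herm, conjTranspose_add, conjTranspose_conjTranspose, star_trivial,
      star_trivial, add_comm Cᴴ C]
  have htrQ : (blockQ M S₀).trace = (n : ℂ) - (S₀.card : ℂ) := by
    rw [blockQ, trace_sub, blockP_trace, trace_one]
    simp
  refine ⟨⟨A, hherm⟩, ?_⟩
  have hPP : blockP M S₀ * blockP M S₀ = blockP M S₀ := blockP_idem M S₀
  have e1 : A.trace = ((α * (S₀.card : ℝ) + β * ((n:ℝ) - (S₀.card : ℝ))) : ℝ) := by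
    rw [hA, trace_add, trace_add, trace_add, trace_smul, trace_smul, blockP_trace, htrQ,
      htrC, htrCH]
    push_cast
    simp only [Complex.real_smul]
    ring
  have e2 : (A * blockP M S₀).trace = ((α * (S₀.card : ℝ)) : ℝ) := by
    rw [hA, add_mul, add_mul, add_mul, Matrix.smul_mul, Matrix.smul_mul, hPP,
      blockQ_mul_blockP, trace_add, trace_add, trace_add, trace_smul, trace_smul,
      blockP_trace, trace_zero, htrCP, htrCHP]
    push_cast
    simp only [Complex.real_smul]
    ring
  have e3 : blockP M S₀ * A * blockQ M S₀ = C := by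
    have hPA : blockP M S₀ * A
        = α • blockP M S₀ + (blockP M S₀ * C + blockP M S₀ * Cᴴ) := by
      rw [hA, mul_add, mul_add, mul_add, Matrix.mul_smul, Matrix.mul_smul, hPP,
        blockP_mul_blockQ, smul_zero, add_zero]
    rw [hPA, add_mul, add_mul, Matrix.smul_mul, blockP_mul_blockQ, smul_zero, zero_add,
      hC, hPCHQ, add_zero]
  have c1 : reTraceL ⟨A, hherm⟩ = a := by
    show (A.trace).re = a
    rw [e1, Complex.ofReal_re, hα, hβ, div_mul_cancel₀ _ hs.ne', div_mul_cancel₀ _ hs2.ne']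
    ring
  have c2 : reTracePL M S₀ ⟨A, hherm⟩ = b := by
    show ((A * blockP M S₀).trace).re = b
    rw [e2, Complex.ofReal_re, hα, div_mul_cancel₀ _ hs.ne']
  have c3 : obPartL M S₀ ⟨A, hherm⟩ = ⟨C, hC⟩ := Subtype.ext e3
  show (reTraceL ⟨A, hherm⟩, reTracePL M S₀ ⟨A, hherm⟩, obPartL M S₀ ⟨A, hherm⟩)
    = (a, b, ⟨C, hC⟩)
  rw [c1, c2, c3]

end Theta

section OffDim

variable (M : Meas n) (S₀ : Finset (Fin n))

noncomputable def mulVecL (P : Matrix (Fin n) (Fin n) ℂ) : (Fin n → ℂ) →ₗ[ℝ] (Fin n → ℂ) where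
  toFun v := P *ᵥ v
  map_add' := by intro v w; simp [mulVec_add]
  map_smul' := by intro r v; simp [mulVec_smul]

lemma mem_range_mulVecL {P : Matrix (Fin n) (Fin n) ℂ} (hP : P * P = P) {v : Fin n → ℂ}
    (hv : v ∈ LinearMap.range (mulVecL P)) : P *ᵥ v = v := by
  obtain ⟨u, rfl⟩ := hv
  show P *ᵥ (P *ᵥ u) = P *ᵥ u
  rw [mulVec_mulVec, hP]

lemma isCompl_ranPQ : IsCompl (LinearMap.range (mulVecL (blockP M S₀)))
    (LinearMap.range (mulVecL (blockQ M S₀))) := by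
  constructor
  · rw [Submodule.disjoint_def]
    intro v hv hv'
    obtain ⟨u, rfl⟩ := hv'
    have h1 : blockP M S₀ *ᵥ (blockQ M S₀ *ᵥ u) = blockQ M S₀ *ᵥ u :=
      mem_range_mulVecL (blockP_idem M S₀) hv
    rw [mulVec_mulVec, blockP_mul_blockQ, zero_mulVec] at h1
    exact h1.symm
  · rw [codisjoint_iff, eq_top_iff]
    intro v _
    rw [Submodule.mem_sup]
    refine ⟨blockP M S₀ *ᵥ v, ⟨v, rfl⟩, blockQ M S₀ *ᵥ v, ⟨v, rfl⟩, ?_⟩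
    rw [blockQ, sub_mulVec, one_mulVec]
    abel

lemma finrank_ranPQ :
    Module.finrank ℝ (LinearMap.range (mulVecL (blockP M S₀)))
      + Module.finrank ℝ (LinearMap.range (mulVecL (blockQ M S₀))) = 2 * n := by
  rw [Submodule.finrank_add_eq_of_isCompl (isCompl_ranPQ M S₀)]
  rw [Module.finrank_pi_fintype ℝ]
  simp [Complex.finrank_real_complex, Finset.sum_const, mul_comm]

lemma vec_ne_zero (i : Fin n) : M.vec i ≠ 0 := by
  intro h
  have := M.ortho i i
  rw [h] at this
  simp at this

noncomputable def rowEmbed (u : Fin n → ℂ) : (Fin n → ℂ) →ₗ[ℝ] Matrix (Fin n) (Fin n) ℂ where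
  toFun w := vecMulVec w (star u)
  map_add' := by
    intro w₁ w₂
    ext i j
    simp [vecMulVec_apply, add_mul]
  map_smul' := by
    intro r w
    ext i j
    simp [vecMulVec_apply, Complex.real_smul]
    ring

noncomputable def colEmbed (u : Fin n → ℂ) : (Fin n → ℂ) →ₗ[ℝ] Matrix (Fin n) (Fin n) ℂ where
  toFun w := vecMulVec u (star w)
  map_add' := by
    intro w₁ w₂
    ext i j
    simp [vecMulVec_apply, mul_add]
  map_smul' := by
    intro r w
    ext i j
    simp [vecMulVec_apply, Complex.real_smul]
    ring

lemma finrank_offBlock_ge (h1 : S₀.Nonempty) (h2 : S₀ ≠ Finset.univ) :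
    n ≤ Module.finrank ℝ (offBlock M S₀) := by
  obtain ⟨i₀, hi₀⟩ := h1
  have hex : ∃ i, i ∉ S₀ := by
    by_contra h
    push_neg at h
    exact h2 (Finset.eq_univ_iff_forall.mpr h)
  obtain ⟨i₁, hi₁⟩ := hex
  set u₀ := M.vec i₀ with hu₀
  set v₀ := M.vec i₁ with hv₀
  have hu₀P : blockP M S₀ *ᵥ u₀ = u₀ := blockP_mulVec_mem M S₀ hi₀
  have hv₀Q : blockQ M S₀ *ᵥ v₀ = v₀ := blockQ_mulVec_mem M S₀ hi₁
  -- embed range of P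
  have memP : ∀ w : LinearMap.range (mulVecL (blockP M S₀)),
      ((rowEmbed v₀).comp (LinearMap.range (mulVecL (blockP M S₀))).subtype) w
        ∈ offBlock M S₀ := by
    intro w
    show blockP M S₀ * vecMulVec (w : Fin n → ℂ) (star v₀) * blockQ M S₀ = _
    rw [mul_vecMulVec, vecMulVec_mul, mem_range_mulVecL (blockP_idem M S₀) w.2,
      vecMul_herm (blockQ_herm M S₀), hv₀Q]
    rfl
  have memQ : ∀ w : LinearMap.range (mulVecL (blockQ M S₀)),
      ((colEmbed u₀).comp (LinearMap.range (mulVecL (blockQ M S₀))).subtype) w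
        ∈ offBlock M S₀ := by
    intro w
    show blockP M S₀ * vecMulVec u₀ (star (w : Fin n → ℂ)) * blockQ M S₀ = _
    rw [mul_vecMulVec, vecMulVec_mul, hu₀P, vecMul_herm (blockQ_herm M S₀),
      mem_range_mulVecL (blockQ_idem M S₀) w.2]
    rfl
  have hinjP : Function.Injective
      (LinearMap.codRestrict (offBlock M S₀) _ memP) := by
    intro w₁ w₂ hw
    apply Subtype.ext
    have hval : vecMulVec (w₁ : Fin n → ℂ) (star v₀)
        = vecMulVec (w₂ : Fin n → ℂ) (star v₀) := congrArg Subtype.val hw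
    have hj : ∃ j, v₀ j ≠ 0 := by
      by_contra h
      push_neg at h
      exact vec_ne_zero M i₁ (funext h)
    obtain ⟨j, hj⟩ := hj
    funext i
    have := congrFun (congrFun hval i) j
    simp only [vecMulVec_apply, Pi.star_apply] at this
    exact mul_right_cancel₀ (star_ne_zero.mpr hj) this
  have hinjQ : Function.Injective
      (LinearMap.codRestrict (offBlock M S₀) _ memQ) := by
    intro w₁ w₂ hw
    apply Subtype.ext
    have hval : vecMulVec u₀ (star (w₁ : Fin n → ℂ))
        = vecMulVec u₀ (star (w₂ : Fin n → ℂ)) := congrArg Subtype.val hw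
    have hi : ∃ i, u₀ i ≠ 0 := by
      by_contra h
      push_neg at h
      exact vec_ne_zero M i₀ (funext h)
    obtain ⟨i, hi⟩ := hi
    funext j
    have := congrFun (congrFun hval i) j
    simp only [vecMulVec_apply, Pi.star_apply] at this
    have := mul_left_cancel₀ hi this
    exact star_injective this
  have hP_le := LinearMap.finrank_le_finrank_of_injective hinjP
  have hQ_le := LinearMap.finrank_le_finrank_of_injective hinjQ
  have hsum := finrank_ranPQ M S₀
  omega

noncomputable def pinchW : Submodule ℝ (Matrix (Fin n) (Fin n) ℂ) :=
  Submodule.map (herm n).subtype (LinearMap.ker (theta M S₀))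

lemma finrank_pinchW_le (h1 : S₀.Nonempty) (h2 : S₀ ≠ Finset.univ) :
    Module.finrank ℝ (pinchW M S₀) ≤ n ^ 2 - n := by
  have hmap : Module.finrank ℝ (pinchW M S₀)
      = Module.finrank ℝ (LinearMap.ker (theta M S₀)) :=
    Submodule.finrank_map_subtype_eq (herm n) _
  have h2' := LinearMap.finrank_range_add_finrank_ker (theta M S₀)
  rw [LinearMap.range_eq_top.mpr (theta_surjective M S₀ h1 h2)] at h2'
  have h3 : Module.finrank ℝ (⊤ : Submodule ℝ (ℝ × ℝ × (offBlock M S₀)))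
      = 2 + Module.finrank ℝ (offBlock M S₀) := by
    rw [finrank_top]
    rw [Module.finrank_prod, Module.finrank_prod]
    simp [Module.finrank_self]
    omega
  rw [finrank_herm, h3] at h2'
  have hob := finrank_offBlock_ge M S₀ h1 h2
  omega

lemma mem_pinchW {A : Matrix (Fin n) (Fin n) ℂ} (hAH : Aᴴ = A) (ht : A.trace = 0)
    (htP : (A * blockP M S₀).trace = 0) (hob : blockP M S₀ * A * blockQ M S₀ = 0) :
    A ∈ pinchW M S₀ := by
  refine ⟨⟨A, hAH⟩, ?_, rfl⟩
  rw [SetLike.mem_coe, LinearMap.mem_ker]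
  show ((A.trace).re, ((A * blockP M S₀).trace).re,
    (⟨blockP M S₀ * A * blockQ M S₀, _⟩ : offBlock M S₀)) = 0
  rw [ht, htP]
  simp only [Complex.zero_re]
  refine Prod.ext rfl (Prod.ext rfl ?_)
  apply Subtype.ext
  simpa using hob

end OffDim

section Pinch

variable (M : Meas n) (S₀ : Finset (Fin n))

noncomputable def pinch (ρ : Matrix (Fin n) (Fin n) ℂ) : Matrix (Fin n) (Fin n) ℂ :=
  blockP M S₀ * ρ * blockP M S₀ + blockQ M S₀ * ρ * blockQ M S₀

lemma pinch_posSemidef {ρ : Matrix (Fin n) (Fin n) ℂ} (hρ : ρ.PosSemidef) :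
    (pinch M S₀ ρ).PosSemidef := by
  have h1 := hρ.mul_mul_conjTranspose_same (blockP M S₀)
  have h2 := hρ.mul_mul_conjTranspose_same (blockQ M S₀)
  rw [blockP_herm] at h1
  rw [blockQ_herm] at h2
  exact h1.add h2

lemma trace_cyc (P ρ E : Matrix (Fin n) (Fin n) ℂ) :
    (P * ρ * P * E).trace = (ρ * (P * E * P)).trace := by
  calc (P * ρ * P * E).trace = (P * (ρ * (P * E))).trace := by simp only [mul_assoc]
  _ = ((ρ * (P * E)) * P).trace := trace_mul_comm _ _
  _ = (ρ * (P * E * P)).trace := by simp only [mul_assoc]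

lemma trace_pinch_mul (ρ E : Matrix (Fin n) (Fin n) ℂ) :
    (pinch M S₀ ρ * E).trace = (ρ * (blockP M S₀ * E * blockP M S₀
      + blockQ M S₀ * E * blockQ M S₀)).trace := by
  rw [pinch, add_mul, trace_add, mul_add, trace_add, trace_cyc, trace_cyc]

lemma trace_pinch (ρ : Matrix (Fin n) (Fin n) ℂ) : (pinch M S₀ ρ).trace = ρ.trace := by
  calc (pinch M S₀ ρ).trace = (pinch M S₀ ρ * 1).trace := by rw [mul_one]
  _ = (ρ * (blockP M S₀ * 1 * blockP M S₀ + blockQ M S₀ * 1 * blockQ M S₀)).trace :=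
      trace_pinch_mul M S₀ ρ 1
  _ = ρ.trace := by
      rw [mul_one, mul_one, blockP_idem, blockQ_idem, blockQ, add_sub_cancel, mul_one]

lemma trace_pinch_blockP (ρ : Matrix (Fin n) (Fin n) ℂ) :
    (pinch M S₀ ρ * blockP M S₀).trace = (ρ * blockP M S₀).trace := by
  rw [trace_pinch_mul]
  congr 1
  rw [blockP_idem, blockP_idem, blockQ_mul_blockP, zero_mul, add_zero]

lemma pinch_offdiag (ρ : Matrix (Fin n) (Fin n) ℂ) :
    blockP M S₀ * pinch M S₀ ρ * blockQ M S₀ = 0 := by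
  rw [pinch, mul_add, add_mul]
  have h1 : blockP M S₀ * (blockP M S₀ * ρ * blockP M S₀) * blockQ M S₀ = 0 := by
    simp only [mul_assoc]
    rw [blockP_mul_blockQ]
    simp only [mul_zero]
  have h2 : blockP M S₀ * (blockQ M S₀ * ρ * blockQ M S₀) * blockQ M S₀ = 0 := by
    simp only [← mul_assoc]
    rw [blockP_mul_blockQ]
    simp only [zero_mul]
  rw [h1, h2, add_zero]

lemma conj_proj {P : Matrix (Fin n) (Fin n) ℂ} (hP : Pᴴ = P) (v : Fin n → ℂ) :
    P * proj v * P = proj (P *ᵥ v) := by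
  rw [proj, mul_vecMulVec, vecMulVec_mul, vecMul_herm hP, proj]

lemma proj_zero : proj (0 : Fin n → ℂ) = 0 := by
  ext i j
  simp [proj, vecMulVec_apply]

lemma pinch_proj {v : Fin n → ℂ}
    (h : blockP M S₀ *ᵥ v = v ∨ blockP M S₀ *ᵥ v = 0) :
    blockP M S₀ * proj v * blockP M S₀ + blockQ M S₀ * proj v * blockQ M S₀ = proj v := by
  rw [conj_proj (blockP_herm M S₀), conj_proj (blockQ_herm M S₀)]
  have hQ : blockQ M S₀ *ᵥ v = v - blockP M S₀ *ᵥ v := by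
    rw [blockQ, sub_mulVec, one_mulVec]
  rcases h with h | h
  · rw [h, hQ, h, sub_self, proj_zero, add_zero]
  · rw [h, hQ, h, sub_zero, proj_zero, zero_add]

lemma trace_pinch_proj {ρ : Matrix (Fin n) (Fin n) ℂ} {v : Fin n → ℂ}
    (h : blockP M S₀ *ᵥ v = v ∨ blockP M S₀ *ᵥ v = 0) :
    (pinch M S₀ ρ * proj v).trace = (ρ * proj v).trace := by
  rw [trace_pinch_mul, pinch_proj M S₀ h]

lemma blockP_mulVec (w : Fin n → ℂ) :
    blockP M S₀ *ᵥ w = ∑ j ∈ S₀, (star (M.vec j) ⬝ᵥ w) • M.vec j := by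
  rw [blockP, sum_mulVec']
  exact Finset.sum_congr rfl fun j _ => mulVec_proj _ _

lemma expand_basis (w : Fin n → ℂ) :
    ∑ j, (star (M.vec j) ⬝ᵥ w) • M.vec j = w := by
  have h := blockP_mulVec M Finset.univ w
  rw [show blockP M Finset.univ = 1 from sum_proj M, one_mulVec] at h
  exact h.symm

end Pinch

section Eig

lemma eig_dot {Z : Matrix (Fin n) (Fin n) ℂ} (hherm : Zᴴ = Z) {c d : ℂ} {u v : Fin n → ℂ}
    (hu : Z *ᵥ u = c • u) (hv : Z *ᵥ v = d • v) (hc : star c = c) :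
    (c - d) * (star u ⬝ᵥ v) = 0 := by
  have h1 : star u ⬝ᵥ (Z *ᵥ v) = d * (star u ⬝ᵥ v) := by
    rw [hv, dotProduct_smul]
    simp
  have h2 : star u ⬝ᵥ (Z *ᵥ v) = c * (star u ⬝ᵥ v) := by
    rw [dotProduct_mulVec, vecMul_herm hherm, hu, star_smul, hc, smul_dotProduct]
    simp
  rw [sub_mul, ← h2, ← h1, sub_self]

lemma rep_mulVec (M : Meas n) (c : Fin n → ℂ) (j : Fin n) :
    (∑ i, c i • proj (M.vec i)) *ᵥ M.vec j = c j • M.vec j := by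
  rw [sum_mulVec']
  have h1 : ∀ i, (c i • proj (M.vec i)) *ᵥ M.vec j
      = if i = j then c i • M.vec j else 0 := by
    intro i
    rw [smul_mulVec]
    by_cases h : i = j
    · subst h; rw [mulVec_proj_same M]; simp
    · rw [mulVec_proj_ne M h]; simp [h]
  simp_rw [h1]
  rw [Finset.sum_ite_eq' Finset.univ j (fun i => c i • M.vec j)]
  simp

lemma blockP_eq_filter_sum (M N : Meas n) (S₀ : Finset (Fin n)) (p : Fin n → Prop)
    [DecidablePred p]
    (h1 : ∀ i, p i → blockP M S₀ *ᵥ N.vec i = N.vec i)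
    (h2 : ∀ i, ¬ p i → blockP M S₀ *ᵥ N.vec i = 0) :
    blockP M S₀ = ∑ i ∈ Finset.univ.filter p, proj (N.vec i) := by
  apply eq_of_mulVec_basis N
  intro j
  rw [show (∑ i ∈ Finset.univ.filter p, proj (N.vec i)) = blockP N (Finset.univ.filter p)
    from rfl]
  by_cases hp : p j
  · rw [h1 j hp, blockP_mulVec_mem N _ (by simp [hp])]
  · rw [h2 j hp, blockP_mulVec_not_mem N _ (by simp [hp])]

end Eig

section Core

lemma trace_sum_proj_mul (M : Meas n) (c : Fin n → ℂ) (j : Fin n) :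
    ((∑ i, c i • proj (M.vec i)) * proj (M.vec j)).trace = c j := by
  rw [Finset.sum_mul]
  have h1 : ∀ i, (c i • proj (M.vec i)) * proj (M.vec j)
      = if i = j then c i • proj (M.vec j) else 0 := by
    intro i
    rw [Matrix.smul_mul, proj_mul_proj]
    split <;> simp
  simp_rw [h1]
  rw [Finset.sum_ite_eq' Finset.univ j (fun i => c i • proj (M.vec j))]
  simp [trace_smul, trace_proj]

lemma one_ne_zero_mat (hn : 1 ≤ n) : (1 : Matrix (Fin n) (Fin n) ℂ) ≠ 0 := by
  intro h
  have := congrFun (congrFun h ⟨0, hn⟩) ⟨0, hn⟩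
  simp at this

lemma core (hn : 3 ≤ n) (F : Fin m → Meas n) (K : Finset (Fin m))
    (hcard : n ^ 2 - n + 2 ≤ K.card)
    (hsub : ∀ G : Finset (Fin m), G ⊆ K → G ≠ K → ConsistentOn F G) :
    ConsistentOn F K := by
  classical
  have hn2 : 3 * n ≤ n ^ 2 := by
    rw [pow_two]
    exact Nat.mul_le_mul_right n hn
  set N := K.card with hN
  have hK8 : 8 ≤ N := by omega
  -- choose the points
  have hxex : ∀ k : {k // k ∈ K}, ∃ ρ : Matrix (Fin n) (Fin n) ℂ, ρ.PosSemidef ∧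
      ρ.trace = 1 ∧ ∀ l ∈ K.erase (k : Fin m), ∀ i,
        (ρ * proj ((F l).vec i)).trace = ((F l).prob i : ℂ) := by
    intro k
    refine hsub (K.erase (k : Fin m)) (Finset.erase_subset _ _) ?_
    intro h
    have h1 := Finset.card_erase_of_mem k.2
    rw [h] at h1
    omega
  choose x hx1 hx2 hx3 using hxex
  have hxsat : ∀ (j : {k // k ∈ K}) (l : Fin m), l ∈ K → l ≠ (j : Fin m) →
      ∀ i, ((x j) * proj ((F l).vec i)).trace = ((F l).prob i : ℂ) := by
    intro j l hl hne i
    exact hx3 j l (Finset.mem_erase.mpr ⟨hne, hl⟩) i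
  by_cases hdep : AffineIndependent ℝ x
  swap
  · exact radon_glue F K x hdep (fun j => ⟨hx1 j, hx2 j, fun l hl hne i => hxsat j l hl hne i⟩)
  have hcardK : Fintype.card {k // k ∈ K} = N := Fintype.card_coe K
  -- subfamily spans
  have hVk : ∀ k : {k // k ∈ K}, constrSub (F (k : Fin m))
      ≤ vectorSpan ℝ (Set.range x) ∧ N - 2 ≤ n ^ 2 - n := by
    intro k
    set e : {l // l ∈ K.erase (k : Fin m)} ↪ {l // l ∈ K} :=
      ⟨fun l => ⟨(l : Fin m), Finset.mem_of_mem_erase l.2⟩, by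
        intro a b hab
        have h2 : ((⟨(a : Fin m), Finset.mem_of_mem_erase a.2⟩ : {l // l ∈ K}) : Fin m)
            = ((⟨(b : Fin m), Finset.mem_of_mem_erase b.2⟩ : {l // l ∈ K}) : Fin m) :=
          congrArg Subtype.val hab
        exact Subtype.ext h2⟩ with he
    have hind : AffineIndependent ℝ (x ∘ e) := hdep.comp_embedding e
    have hcard' : Fintype.card {l // l ∈ K.erase (k : Fin m)} = N - 1 := by
      rw [Fintype.card_coe, Finset.card_erase_of_mem k.2]
    have hle : vectorSpan ℝ (Set.range (x ∘ e)) ≤ constrSub (F (k : Fin m)) := by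
      rw [vectorSpan_def, Submodule.span_le]
      rintro v hv
      rw [Set.mem_vsub] at hv
      obtain ⟨p1, hp1, p2, hp2, rfl⟩ := hv
      obtain ⟨j1, rfl⟩ := hp1
      obtain ⟨j2, rfl⟩ := hp2
      have hv : (x ∘ e) j1 -ᵥ (x ∘ e) j2 = x (e j1) - x (e j2) := rfl
      rw [hv, SetLike.mem_coe, mem_constrSub]
      have hne1 : (((j1 : {l // l ∈ K.erase (k : Fin m)}) : Fin m)) ≠ (k : Fin m) :=
        (Finset.mem_erase.mp j1.2).1
      have hne2 : (((j2 : {l // l ∈ K.erase (k : Fin m)}) : Fin m)) ≠ (k : Fin m) :=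
        (Finset.mem_erase.mp j2.2).1
      constructor
      · show ((x (e j1)) - (x (e j2)))ᴴ = _
        rw [conjTranspose_sub, (hx1 (e j1)).1.eq, (hx1 (e j2)).1.eq]
      · intro i
        show (((x (e j1)) - (x (e j2))) * proj ((F (k : Fin m)).vec i)).trace = 0
        rw [sub_mul, trace_sub, hxsat (e j1) (k : Fin m) k.2 hne1.symm i,
          hxsat (e j2) (k : Fin m) k.2 hne2.symm i, sub_self]
    have hfr : Module.finrank ℝ (vectorSpan ℝ (Set.range (x ∘ e))) = N - 2 := by
      apply hind.finrank_vectorSpan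
      rw [hcard']
      omega
    have hmono := Submodule.finrank_mono hle
    rw [hfr, finrank_constrSub] at hmono
    have heq : vectorSpan ℝ (Set.range (x ∘ e)) = constrSub (F (k : Fin m)) := by
      apply Submodule.eq_of_le_of_finrank_le hle
      rw [hfr, finrank_constrSub]
      omega
    refine ⟨?_, hmono⟩
    rw [← heq]
    apply vectorSpan_mono
    rintro v ⟨j, rfl⟩
    exact ⟨e j, rfl⟩
  have hNle : N - 2 ≤ n ^ 2 - n := (hVk ⟨K.min' (Finset.card_pos.mp (by omega)),
    K.min'_mem _⟩).2
  -- span of the whole family and the orthogonal matrix Z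
  have hfrVM : Module.finrank ℝ (vectorSpan ℝ (Set.range x)) = N - 1 := by
    apply hdep.finrank_vectorSpan
    rw [hcardK]
    omega
  set SS := vectorSpan ℝ (Set.range x) ⊔ (ℝ ∙ (1 : Matrix (Fin n) (Fin n) ℂ)) with hSS
  have hfrSS : Module.finrank ℝ SS ≤ N := by
    have h1 := Submodule.finrank_sup_add_finrank_inf_eq (vectorSpan ℝ (Set.range x))
      (ℝ ∙ (1 : Matrix (Fin n) (Fin n) ℂ))
    have h2 : Module.finrank ℝ (ℝ ∙ (1 : Matrix (Fin n) (Fin n) ℂ)) = 1 :=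
      finrank_span_singleton (one_ne_zero_mat (by omega))
    rw [← hSS, hfrVM, h2] at h1
    omega
  obtain ⟨Z, hZh, hZne, hZperp⟩ := exists_perp SS (by omega)
  set c : {k // k ∈ K} → Fin n → ℂ :=
    fun k i => (Z * proj ((F (k : Fin m)).vec i)).trace with hc
  have hcreal : ∀ k i, star (c k i) = c k i :=
    fun k i => trace_mul_real hZh (proj_herm _)
  have hrep : ∀ k : {k // k ∈ K}, Z = ∑ i, c k i • proj ((F (k : Fin m)).vec i) := by
    intro k
    have hAherm : (Z - ∑ i, c k i • proj ((F (k : Fin m)).vec i))ᴴ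
        = Z - ∑ i, c k i • proj ((F (k : Fin m)).vec i) := by
      rw [conjTranspose_sub, hZh, conjTranspose_sum]
      congr 1
      refine Finset.sum_congr rfl fun i _ => ?_
      rw [conjTranspose_smul, proj_herm, hcreal]
    have hAconstr : ∀ i, ((Z - ∑ i, c k i • proj ((F (k : Fin m)).vec i))
        * proj ((F (k : Fin m)).vec i)).trace = 0 := by
      intro i
      rw [sub_mul, trace_sub, trace_sum_proj_mul]
      simp only [hc]
      rw [sub_self]
    have hAmem : (Z - ∑ i, c k i • proj ((F (k : Fin m)).vec i)) ∈ SS :=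
      SetLike.le_def.mp le_sup_left
        ((hVk k).1 (mem_constrSub.mpr ⟨hAherm, hAconstr⟩))
    have h1 : ((Z * (Z - ∑ i, c k i • proj ((F (k : Fin m)).vec i))).trace).re = 0 :=
      hZperp _ hAmem
    have h2 : ((∑ i, c k i • proj ((F (k : Fin m)).vec i))
        * (Z - ∑ i, c k i • proj ((F (k : Fin m)).vec i))).trace = 0 := by
      rw [Finset.sum_mul, trace_sum]
      refine Finset.sum_eq_zero fun i _ => ?_
      rw [Matrix.smul_mul, trace_smul, trace_mul_comm, hAconstr i, smul_zero]
    have h3 : (((Z - ∑ i, c k i • proj ((F (k : Fin m)).vec i))ᴴ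
        * (Z - ∑ i, c k i • proj ((F (k : Fin m)).vec i))).trace).re = 0 := by
      rw [hAherm, sub_mul, trace_sub, Complex.sub_re, h2]
      simp only [Complex.zero_re, sub_zero]
      exact h1
    have h4 := eq_zero_of_trace_conj_self h3
    exact (sub_eq_zero.mp h4).symm ▸ rfl
  have heig : ∀ (k : {k // k ∈ K}) i,
      Z *ᵥ (F (k : Fin m)).vec i = c k i • (F (k : Fin m)).vec i := by
    intro k i
    conv_lhs => rw [hrep k]
    exact rep_mulVec _ _ _
  have hZtr : Z.trace = 0 := by
    have h1 : (1 : Matrix (Fin n) (Fin n) ℂ) ∈ SS :=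
      SetLike.le_def.mp le_sup_right (Submodule.mem_span_singleton_self _)
    have h2 := hZperp 1 h1
    rw [mul_one] at h2
    refine complex_eq_zero_of_real ?_ h2
    rw [← trace_conjTranspose, hZh]
  obtain ⟨k₀v, hk₀v⟩ : K.Nonempty := Finset.card_pos.mp (by omega)
  set k₀ : {k // k ∈ K} := ⟨k₀v, hk₀v⟩ with hk₀
  have hsumc : ∑ i, c k₀ i = 0 := by
    have h1 : ∑ i, c k₀ i
        = (Z * ∑ i, proj ((F (k₀ : Fin m)).vec i)).trace := by
      rw [Finset.mul_sum, trace_sum]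
    rw [h1, sum_proj, mul_one, hZtr]
  have hex0 : ∃ i₀, c k₀ i₀ ≠ 0 := by
    by_contra h
    push_neg at h
    apply hZne
    rw [hrep k₀]
    refine Finset.sum_eq_zero fun i _ => ?_
    rw [h i, zero_smul]
  obtain ⟨i₀, hi₀⟩ := hex0
  set S₀ := Finset.univ.filter (fun i => c k₀ i = c k₀ i₀) with hS₀def
  have hS₀ne : S₀.Nonempty := ⟨i₀, by simp [hS₀def]⟩
  have hS₀prop : S₀ ≠ Finset.univ := by
    intro h
    have hall : ∀ i, c k₀ i = c k₀ i₀ := by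
      intro i
      have h2 : i ∈ S₀ := h ▸ Finset.mem_univ i
      simpa [hS₀def] using h2
    have h3 : ∑ i, c k₀ i = (n : ℂ) * c k₀ i₀ := by
      rw [Finset.sum_congr rfl (fun i _ => hall i)]
      simp [Finset.sum_const, Finset.card_univ, mul_comm]
    rw [hsumc] at h3
    have hn0 : (n : ℂ) ≠ 0 := by
      exact_mod_cast (by omega : (n:ℕ) ≠ 0)
    exact hi₀ (by
      rcases mul_eq_zero.mp h3.symm with h' | h'
      · exact absurd h' hn0
      · exact h')
  -- cross-basis eigenprojection lemma
  have hcross : ∀ (k : {k // k ∈ K}) i,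
      (c k i = c k₀ i₀ →
        blockP (F (k₀ : Fin m)) S₀ *ᵥ (F (k : Fin m)).vec i = (F (k : Fin m)).vec i) ∧
      (c k i ≠ c k₀ i₀ →
        blockP (F (k₀ : Fin m)) S₀ *ᵥ (F (k : Fin m)).vec i = 0) := by
    intro k i
    have hPv := blockP_mulVec (F (k₀ : Fin m)) S₀ ((F (k : Fin m)).vec i)
    have hdotzero : ∀ j, c k₀ j ≠ c k i →
        star ((F (k₀ : Fin m)).vec j) ⬝ᵥ (F (k : Fin m)).vec i = 0 := by
      intro j hjne
      have hzero := eig_dot hZh (heig k₀ j) (heig k i) (hcreal k₀ j)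
      rcases mul_eq_zero.mp hzero with h' | h'
      · exact absurd (sub_eq_zero.mp h') hjne
      · exact h'
    constructor
    · intro hcki
      have hexp := expand_basis (F (k₀ : Fin m)) ((F (k : Fin m)).vec i)
      have hsplit := Finset.sum_filter_add_sum_filter_not Finset.univ
        (fun j => c k₀ j = c k₀ i₀)
        (fun j => (star ((F (k₀ : Fin m)).vec j) ⬝ᵥ (F (k : Fin m)).vec i)
          • (F (k₀ : Fin m)).vec j)
      have hvanish : ∑ j ∈ Finset.univ.filter (fun j => ¬ c k₀ j = c k₀ i₀),
          (star ((F (k₀ : Fin m)).vec j) ⬝ᵥ (F (k : Fin m)).vec i)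
            • (F (k₀ : Fin m)).vec j = 0 := by
        refine Finset.sum_eq_zero fun j hj => ?_
        have hjne : c k₀ j ≠ c k₀ i₀ := by simpa using (Finset.mem_filter.mp hj).2
        rw [hdotzero j (by rw [hcki]; exact hjne), zero_smul]
      rw [hPv, ← hS₀def] at *
      rw [hvanish, add_zero, hexp] at hsplit
      rw [hsplit]
    · intro hcki
      rw [hPv]
      refine Finset.sum_eq_zero fun j hj => ?_
      have hjeq : c k₀ j = c k₀ i₀ := by
        have := Finset.mem_filter.mp (hS₀def ▸ hj)
        simpa using this.2
      rw [hdotzero j (by rw [hjeq]; exact fun h => hcki h.symm), zero_smul]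
  have hPk : ∀ k : {k // k ∈ K},
      blockP (F (k₀ : Fin m)) S₀
        = ∑ i ∈ Finset.univ.filter (fun i => c k i = c k₀ i₀),
            proj ((F (k : Fin m)).vec i) := by
    intro k
    exact blockP_eq_filter_sum (F (k₀ : Fin m)) (F (k : Fin m)) S₀ _
      (fun i hi => (hcross k i).1 hi) (fun i hi => (hcross k i).2 hi)
  -- the masses agree
  have hq : ∀ k l : {k // k ∈ K},
      ((∑ i ∈ Finset.univ.filter (fun i => c k i = c k₀ i₀), (F (k : Fin m)).prob i : ℝ) : ℂ)
        = ((∑ i ∈ Finset.univ.filter (fun i => c l i = c k₀ i₀),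
            (F (l : Fin m)).prob i : ℝ) : ℂ) := by
    intro k l
    by_cases hkl : k = l
    · rw [hkl]
    have hGsub : ({(k : Fin m), (l : Fin m)} : Finset (Fin m)) ⊆ K := by
      intro a ha
      rcases Finset.mem_insert.mp ha with rfl | ha
      · exact k.2
      · rw [Finset.mem_singleton.mp ha]; exact l.2
    have hGne : ({(k : Fin m), (l : Fin m)} : Finset (Fin m)) ≠ K := by
      intro h
      have h2 : K.card ≤ 2 := by
        rw [← h]
        exact (Finset.card_insert_le _ _).trans (by simp)
      omega
    obtain ⟨σ, hσ1, hσ2, hσ3⟩ := hsub _ hGsub hGne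
    have htr : ∀ j : {k // k ∈ K},
        (j : Fin m) ∈ ({(k : Fin m), (l : Fin m)} : Finset (Fin m)) →
        (σ * blockP (F (k₀ : Fin m)) S₀).trace
          = ((∑ i ∈ Finset.univ.filter (fun i => c j i = c k₀ i₀),
              (F (j : Fin m)).prob i : ℝ) : ℂ) := by
      intro j hj
      rw [hPk j, Finset.mul_sum, trace_sum]
      rw [Finset.sum_congr rfl (fun i _ => hσ3 (j : Fin m) hj i)]
      rw [Complex.ofReal_sum]
    rw [← htr k (by simp), htr l (by simp)]
  -- common block mass for the chosen points
  have hxP : ∀ j : {k // k ∈ K}, (x j * blockP (F (k₀ : Fin m)) S₀).trace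
      = ((∑ i ∈ Finset.univ.filter (fun i => c k₀ i = c k₀ i₀),
          (F (k₀ : Fin m)).prob i : ℝ) : ℂ) := by
    intro j
    have hex : ∃ lv ∈ K, lv ≠ (j : Fin m) := by
      by_contra h
      push_neg at h
      have h2 : K ⊆ {(j : Fin m)} := fun a ha => Finset.mem_singleton.mpr (h a ha)
      have h3 := Finset.card_le_card h2
      rw [Finset.card_singleton] at h3
      omega
    obtain ⟨lv, hlv, hlvne⟩ := hex
    have h1 : (x j * blockP (F (k₀ : Fin m)) S₀).trace
        = ((∑ i ∈ Finset.univ.filter (fun i => c ⟨lv, hlv⟩ i = c k₀ i₀),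
            (F lv).prob i : ℝ) : ℂ) := by
      rw [hPk ⟨lv, hlv⟩, Finset.mul_sum, trace_sum]
      rw [Finset.sum_congr rfl (fun i _ => hxsat j lv hlv hlvne i)]
      rw [Complex.ofReal_sum]
    rw [h1, hq ⟨lv, hlv⟩ k₀]
  -- adaptedness of all bases in K
  have hadapted : ∀ lv : Fin m, lv ∈ K → ∀ i,
      blockP (F (k₀ : Fin m)) S₀ *ᵥ (F lv).vec i = (F lv).vec i ∨
      blockP (F (k₀ : Fin m)) S₀ *ᵥ (F lv).vec i = 0 := by
    intro lv hlv i
    by_cases hcc : c ⟨lv, hlv⟩ i = c k₀ i₀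
    · exact Or.inl ((hcross ⟨lv, hlv⟩ i).1 hcc)
    · exact Or.inr ((hcross ⟨lv, hlv⟩ i).2 hcc)
  -- the pinched family is affinely dependent
  have hydep : ¬ AffineIndependent ℝ (fun k : {k // k ∈ K} =>
      pinch (F (k₀ : Fin m)) S₀ (x k)) := by
    intro hyind
    have hle : vectorSpan ℝ (Set.range (fun k : {k // k ∈ K} =>
        pinch (F (k₀ : Fin m)) S₀ (x k))) ≤ pinchW (F (k₀ : Fin m)) S₀ := by
      rw [vectorSpan_def, Submodule.span_le]
      rintro v hv
      rw [Set.mem_vsub] at hv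
      obtain ⟨p1, hp1, p2, hp2, rfl⟩ := hv
      obtain ⟨j1, rfl⟩ := hp1
      obtain ⟨j2, rfl⟩ := hp2
      have hv2 : pinch (F (k₀ : Fin m)) S₀ (x j1) -ᵥ pinch (F (k₀ : Fin m)) S₀ (x j2)
          = pinch (F (k₀ : Fin m)) S₀ (x j1) - pinch (F (k₀ : Fin m)) S₀ (x j2) := rfl
      rw [hv2, SetLike.mem_coe]
      apply mem_pinchW
      · rw [conjTranspose_sub, (pinch_posSemidef _ _ (hx1 j1)).1.eq,
          (pinch_posSemidef _ _ (hx1 j2)).1.eq]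
      · rw [trace_sub, trace_pinch, trace_pinch, hx2, hx2, sub_self]
      · rw [sub_mul, trace_sub, trace_pinch_blockP, trace_pinch_blockP, hxP j1, hxP j2,
          sub_self]
      · rw [mul_sub, sub_mul, pinch_offdiag, pinch_offdiag, sub_self]
    have hfr := hyind.finrank_vectorSpan (n := N - 1) (by rw [hcardK]; omega)
    have hmono2 := Submodule.finrank_mono hle
    have hWle := finrank_pinchW_le (F (k₀ : Fin m)) S₀ hS₀ne hS₀prop
    rw [hfr] at hmono2
    omega
  exact radon_glue F K _ hydep (fun j =>
    ⟨pinch_posSemidef _ _ (hx1 j), by rw [trace_pinch]; exact hx2 j,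
      fun l hl hne i => by
        rw [trace_pinch_proj _ _ (hadapted l hl i), hxsat j l hl hne i]⟩)

end Core

end QPA

/-- For `n ≥ 3`, a quantum probability assignment `F` on `ℂⁿ` is consistent iff every
subset of `F` of size at most `n² − n + 1` is consistent. -/
theorem consistency_of_subsets_dim_ge_three {n m : ℕ} (hn : 3 ≤ n) (F : Fin m → Meas n) :
    ConsistentOn F Finset.univ ↔
      ∀ G : Finset (Fin m), G.card ≤ n ^ 2 - n + 1 → ConsistentOn F G := by
  constructor
  · rintro ⟨ρ, h1, h2, h3⟩ G _
    exact ⟨ρ, h1, h2, fun k _ i => h3 k (Finset.mem_univ k) i⟩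
  · intro h
    have hall : ∀ (t : ℕ) (K : Finset (Fin m)), K.card ≤ t → ConsistentOn F K := by
      intro t
      induction t with
      | zero => exact fun K hK => h K (by omega)
      | succ t ih =>
        intro K hK
        by_cases hc : K.card ≤ n ^ 2 - n + 1
        · exact h K hc
        · refine QPA.core hn F K (by omega) (fun G hG hne => ih G ?_)
          have := Finset.card_lt_card (Finset.ssubset_iff_subset_ne.mpr ⟨hG, hne⟩)
          omega
    exact hall _ Finset.univ le_rfl
end

section
/- Let n ≥ 2 and let F = {⟨B_1,S_1⟩, …, ⟨B_m,S_m⟩} be a quantum probability assignment on ℂⁿ. Then F is consistent if and only if every subset G ⊆ F of size at most n² − n + 2 is consistent. -/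
open Matrix ComplexOrder

/-!
Fix one member `μ₀ = F k₀`. The Hermitian matrices `σ` with `tr (σ Pᵢ) = pᵢ` for the
projections of `μ₀` form an affine subspace whose direction is the kernel of the surjection
`σ ↦ (tr (σ Pᵢ))ᵢ` from the `n²`-dimensional real space of Hermitian matrices onto `ℝⁿ`, so it
has dimension `n² - n`. The density matrices consistent with both `μ₀` and `F k` are convex
subsets of it, and Helly's theorem there says they have a common point as soon as any
`n² - n + 1` of them do, i.e. as soon as every subfamily of `n² - n + 2` members containing `μ₀`
is consistent.
-/

open Finset Module ComplexStarModule

namespace Convex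

variable {ι 𝕜 E : Type*} [Field 𝕜] [LinearOrder 𝕜] [IsStrictOrderedRing 𝕜]
  [AddCommGroup E] [Module 𝕜 E]

theorem helly_theorem_of_subset_affineSubspace {F : ι → Set E} {s : Finset ι}
    [FiniteDimensional 𝕜 E] (A : AffineSubspace 𝕜 E)
    (h_sub : ∀ i ∈ s, F i ⊆ A) (h_convex : ∀ i ∈ s, Convex 𝕜 (F i))
    (h_inter : ∀ I ⊆ s, #I ≤ finrank 𝕜 A.direction + 1 → (⋂ i ∈ I, F i).Nonempty) :
    (⋂ i ∈ s, F i).Nonempty := by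
  rcases s.eq_empty_or_nonempty with rfl | ⟨i₀, hi₀⟩
  · simp
  obtain ⟨p, hp⟩ : (F i₀).Nonempty := by
    simpa using h_inter {i₀} (by simpa) (by simp)
  let f : A.direction → E := fun v ↦ p + v
  obtain ⟨v, hv⟩ : (⋂ i ∈ s, f ⁻¹' F i).Nonempty := by
    refine helly_theorem' (fun i hi ↦ ((h_convex i hi).translate_preimage_right p).linear_preimage
      A.direction.subtype) fun I hI hcard ↦ ?_
    rcases I.eq_empty_or_nonempty with rfl | ⟨j, hj⟩
    · simp
    obtain ⟨x, hx⟩ := h_inter I hI hcard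
    have hxA : x ∈ A := h_sub j (hI hj) (Set.mem_iInter₂.mp hx j hj)
    refine ⟨⟨x -ᵥ p, AffineSubspace.vsub_mem_direction hxA (h_sub i₀ hi₀ hp)⟩, ?_⟩
    simpa [f, ← Set.preimage_iInter₂] using hx
  exact ⟨f v, by simpa [← Set.preimage_iInter₂] using hv⟩

end Convex

section ComplexStarModule

variable {A : Type*} [AddCommGroup A] [Module ℂ A] [StarAddMonoid A] [StarModule ℂ A]

noncomputable def realPartImaginaryPartEquiv : A ≃ₗ[ℝ] selfAdjoint A × selfAdjoint A where
  __ := realPart.prod imaginaryPart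
  invFun x := x.1 + Complex.I • (x.2 : A)
  left_inv x := realPart_add_I_smul_imaginaryPart x
  right_inv x := by ext <;> simp

instance [FiniteDimensional ℝ A] : FiniteDimensional ℝ (selfAdjoint A) :=
  .of_surjective _ realPart_surjective

theorem finrank_real_eq_two_mul_finrank_selfAdjoint [FiniteDimensional ℝ A] :
    finrank ℝ A = 2 * finrank ℝ (selfAdjoint A) := by
  rw [realPartImaginaryPartEquiv.finrank_eq, finrank_prod, two_mul]

end ComplexStarModule

theorem isSelfAdjoint_proj {n : ℕ} (v : Fin n → ℂ) : IsSelfAdjoint (proj v) :=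
  (posSemidef_vecMulVec_self_star v).isHermitian

namespace Meas

variable {n : ℕ} (μ : Meas n)

theorem trace_proj_mul_proj (i j : Fin n) :
    (proj (μ.vec i) * proj (μ.vec j)).trace = if i = j then 1 else 0 := by
  rw [proj, proj, vecMulVec_mul_vecMulVec, trace_vecMulVec, dotProduct_smul,
    dotProduct_comm (μ.vec i), μ.ortho, μ.ortho]
  by_cases h : i = j <;> simp [h, Ne.symm]

def states : Set (Matrix (Fin n) (Fin n) ℂ) :=
  {ρ | ρ.PosSemidef ∧ ρ.trace = 1 ∧ ∀ i, (ρ * proj (μ.vec i)).trace = μ.prob i}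

theorem convex_states : Convex ℝ μ.states := by
  rintro ρ ⟨hρ, hρ_trace, hρ_prob⟩ σ ⟨hσ, hσ_trace, hσ_prob⟩ a b ha hb hab
  have hab' : (a : ℂ) + b = 1 := mod_cast hab
  refine ⟨(hρ.smul ha).add (hσ.smul hb), ?_, fun i ↦ ?_⟩
  · simpa [trace_add, trace_smul, hρ_trace, hσ_trace] using hab'
  · simp only [add_mul, smul_mul, trace_add, trace_smul, hρ_prob, hσ_prob, Complex.real_smul]
    linear_combination (μ.prob i : ℂ) * hab'

noncomputable def probMap : selfAdjoint (Matrix (Fin n) (Fin n) ℂ) →ₗ[ℝ] Fin n → ℝ where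
  toFun σ i := ((σ : Matrix (Fin n) (Fin n) ℂ) * proj (μ.vec i)).trace.re
  map_add' σ τ := by ext i; simp [add_mul, trace_add]
  map_smul' c σ := by ext i; simp [selfAdjoint.val_smul, trace_smul]

theorem probMap_proj (i : Fin n) :
    μ.probMap ⟨proj (μ.vec i), isSelfAdjoint_proj _⟩ = Pi.single i 1 := by
  ext j
  simp [probMap, trace_proj_mul_proj, Pi.single_apply, eq_comm, apply_ite]

theorem probMap_surjective : Function.Surjective μ.probMap := by
  intro c
  refine ⟨∑ i, c i • ⟨proj (μ.vec i), isSelfAdjoint_proj _⟩, ?_⟩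
  ext j
  simp [map_sum, probMap_proj, Pi.single_apply]

theorem finrank_ker_probMap : finrank ℝ (LinearMap.ker μ.probMap) = n ^ 2 - n := by
  have h_sa : 2 * n ^ 2 = 2 * finrank ℝ (selfAdjoint (Matrix (Fin n) (Fin n) ℂ)) := by
    rw [← finrank_real_eq_two_mul_finrank_selfAdjoint, finrank_matrix,
      Complex.finrank_real_complex, Fintype.card_fin]
    ring
  have := μ.probMap.finrank_range_add_finrank_ker
  rw [LinearMap.range_eq_top.2 μ.probMap_surjective, finrank_top, finrank_fin_fun] at this
  omega

theorem sub_mem_ker_probMap {σ τ : selfAdjoint (Matrix (Fin n) (Fin n) ℂ)}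
    (hσ : (σ : Matrix (Fin n) (Fin n) ℂ) ∈ μ.states)
    (hτ : (τ : Matrix (Fin n) (Fin n) ℂ) ∈ μ.states) :
    σ - τ ∈ LinearMap.ker μ.probMap := by
  ext i
  simp [probMap, sub_mul, trace_sub, hσ.2.2 i, hτ.2.2 i]

end Meas

theorem ConsistentOn.mono {n m : ℕ} {F : Fin m → Meas n} {G H : Finset (Fin m)} (hGH : G ⊆ H)
    (h : ConsistentOn F H) : ConsistentOn F G :=
  let ⟨ρ, hρ, hρ_trace, hρ_prob⟩ := h
  ⟨ρ, hρ, hρ_trace, fun k hk ↦ hρ_prob k (hGH hk)⟩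

theorem consistentOn_insert_iff {n m : ℕ} {F : Fin m → Meas n} {k : Fin m}
    {G : Finset (Fin m)} :
    ConsistentOn F (insert k G) ↔ ∃ ρ ∈ (F k).states, ∀ j ∈ G, ρ ∈ (F j).states := by
  constructor
  · rintro ⟨ρ, hρ, hρ_trace, hρ_prob⟩
    exact ⟨ρ, ⟨hρ, hρ_trace, hρ_prob k (mem_insert_self k G)⟩,
      fun j hj ↦ ⟨hρ, hρ_trace, hρ_prob j (mem_insert_of_mem hj)⟩⟩
  · rintro ⟨ρ, ⟨hρ, hρ_trace, hρ_prob⟩, hρ_G⟩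
    refine ⟨ρ, hρ, hρ_trace, fun j hj ↦ ?_⟩
    rcases mem_insert.1 hj with rfl | hj
    exacts [hρ_prob, (hρ_G j hj).2.2]

theorem exists_forall_mem_states {n : ℕ} {ι : Type*} (F : ι → Meas n) (k₀ : ι) (s : Finset ι)
    (h : ∀ I ⊆ s, #I ≤ n ^ 2 - n + 1 → ∃ ρ ∈ (F k₀).states, ∀ k ∈ I, ρ ∈ (F k).states) :
    ∃ ρ ∈ (F k₀).states, ∀ k ∈ s, ρ ∈ (F k).states := by
  obtain ⟨ρ₀, hρ₀, -⟩ := h ∅ (empty_subset s) (by simp)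
  rcases s.eq_empty_or_nonempty with rfl | ⟨k₁, hk₁⟩
  · exact ⟨ρ₀, hρ₀, by simp⟩
  let σ₀ : selfAdjoint (Matrix (Fin n) (Fin n) ℂ) := ⟨ρ₀, hρ₀.1.isHermitian⟩
  let C : ι → Set (selfAdjoint (Matrix (Fin n) (Fin n) ℂ)) :=
    fun k ↦ {σ | (σ : Matrix (Fin n) (Fin n) ℂ) ∈ (F k₀).states ∩ (F k).states}
  obtain ⟨σ, hσ⟩ : (⋂ k ∈ s, C k).Nonempty := by
    refine Convex.helly_theorem_of_subset_affineSubspace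
      (AffineSubspace.mk' σ₀ (LinearMap.ker (F k₀).probMap)) (fun k _ σ hσ ↦ ?_)
      (fun k _ ↦ ?_) ?_
    · exact AffineSubspace.mem_mk'.2 ((F k₀).sub_mem_ker_probMap hσ.1 hρ₀)
    · exact ((F k₀).convex_states.inter (F k).convex_states).linear_preimage
        (selfAdjoint.submodule ℝ _).subtype
    · intro I hIs hI
      rw [AffineSubspace.direction_mk', Meas.finrank_ker_probMap] at hI
      obtain ⟨ρ, hρ, hρ_I⟩ := h I hIs hI
      exact ⟨⟨ρ, hρ.1.isHermitian⟩, Set.mem_iInter₂.2 fun k hk ↦ ⟨hρ, hρ_I k hk⟩⟩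
  exact ⟨σ, (Set.mem_iInter₂.1 hσ k₁ hk₁).1, fun k hk ↦ (Set.mem_iInter₂.1 hσ k hk).2⟩

theorem consistency_of_subsets_weak_general {n m : ℕ} (F : Fin m → Meas n) :
    ConsistentOn F Finset.univ ↔
      ∀ G : Finset (Fin m), G.card ≤ n ^ 2 - n + 2 → ConsistentOn F G := by
  refine ⟨fun h G _ ↦ h.mono G.subset_univ, fun h ↦ ?_⟩
  rcases isEmpty_or_nonempty (Fin m) with _ | ⟨⟨k₀⟩⟩
  · exact h univ (by simp)
  rw [← insert_eq_of_mem (mem_univ k₀), consistentOn_insert_iff]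
  exact exists_forall_mem_states F k₀ univ fun I _ hI ↦
    consistentOn_insert_iff.1 (h _ ((card_insert_le _ _).trans (by omega)))

/-- For `n ≥ 2`, a quantum probability assignment `F` on `ℂⁿ` is consistent iff every
subset of `F` of size at most `n² − n + 2` is consistent. -/
theorem consistency_of_subsets_weak {n m : ℕ} (hn : 2 ≤ n) (F : Fin m → Meas n) :
    ConsistentOn F Finset.univ ↔
      ∀ G : Finset (Fin m), G.card ≤ n ^ 2 - n + 2 → ConsistentOn F G :=
  consistency_of_subsets_weak_general F
end

section
/- Define the 2×2 complex matrices P¹ = [[1,0],[0,0]], P² = (1/2)[[1,−1],[−1,1]], P³ = (1/2)[[1,−i],[i,1]], and P⁴ = (1/5)[[4,(6+8i)/5],[(6−8i)/5,1]], and the four bases B_j = {P^j, I − P^j} for j = 1,…,4, with probability assignments p(P¹) = 1/2, p(P²) = 5/12, p(P³) = 3/8, p(P⁴) = 9/16 (and complementary probabilities on I − P^j). Then: (a) for every choice of three of the four bases there exists a density matrix ρ (a 2×2 positive semidefinite complex matrix with trace 1) with tr(ρ P^j) equal to the assigned probability for each of those three bases; but (b) there is no density matrix ρ satisfying tr(ρ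 P^j) equal to the assigned probability simultaneously for all four bases. -/
/-!
In the parametrisation `ρ = !![a, c; c̄, 1 - a]` the first three probabilities are `a`,
`1/2 - Re c` and `1/2 - Im c`, so they determine `ρ`; in fact `P⁴` is a real affine combination
of `I, P¹, P², P³`, which forces `tr(ρ P⁴) = 31/50 ≠ 9/16` on any `ρ` of trace one matching the
other three. Dropping any one of the four conditions leaves a free parameter, and it can be
chosen so that `|c|² ≤ a (1 - a)`, i.e. so that `ρ` is positive semidefinite.
-/

open Matrix ComplexOrder

/-- The four rank-one projections `P¹, P², P³, P⁴` on `ℂ²`. -/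
noncomputable def Pex : Fin 4 → Matrix (Fin 2) (Fin 2) ℂ :=
  ![!![1, 0; 0, 0],
    (1 / 2 : ℂ) • !![1, -1; -1, 1],
    (1 / 2 : ℂ) • !![1, -Complex.I; Complex.I, 1],
    (1 / 5 : ℂ) • !![4, (6 + 8 * Complex.I) / 5; (6 - 8 * Complex.I) / 5, 1]]

/-- The assigned probabilities `p(P¹) = 1/2`, `p(P²) = 5/12`, `p(P³) = 3/8`,
`p(P⁴) = 9/16`. -/
noncomputable def pex : Fin 4 → ℝ := ![1 / 2, 5 / 12, 3 / 8, 9 / 16]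

theorem posSemidef_of_normSq_le_mul {a b : ℝ} {c : ℂ} (ha : 0 ≤ a) (hb : 0 ≤ b)
    (hc : Complex.normSq c ≤ a * b) : !![(a : ℂ), c; star c, (b : ℂ)].PosSemidef := by
  rw [posSemidef_iff_dotProduct_mulVec]
  refine ⟨?_, fun v => ?_⟩
  · ext i j
    fin_cases i <;> fin_cases j <;> simp
  rw [Complex.nonneg_iff]
  simp only [dotProduct, Pi.star_apply, RCLike.star_def, mulVec, of_apply, cons_val',
    cons_val_fin_one, Fin.sum_univ_two, cons_val_zero, cons_val_one, Complex.add_re,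
    Complex.mul_re, Complex.conj_re, Complex.ofReal_re, Complex.ofReal_im, zero_mul, sub_zero,
    Complex.conj_im, Complex.add_im, Complex.mul_im, add_zero, neg_mul, sub_neg_eq_add]
  refine ⟨?_, by ring⟩
  rw [Complex.normSq_apply] at hc
  set p := (v 0).re
  set q := (v 0).im
  set r := (v 1).re
  set s := (v 1).im
  rcases ha.eq_or_lt with rfl | ha
  · have hre : c.re = 0 := by nlinarith [sq_nonneg c.re, sq_nonneg c.im]
    have him : c.im = 0 := by nlinarith [sq_nonneg c.re, sq_nonneg c.im]
    rw [hre, him]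
    nlinarith [mul_nonneg hb (sq_nonneg r), mul_nonneg hb (sq_nonneg s)]
  · -- `a · v*Mv = |a v₀ + c v₁|² + (ab - |c|²) |v₁|²`
    refine nonneg_of_mul_nonneg_right ?_ ha
    nlinarith [sq_nonneg (a * p + c.re * r - c.im * s), sq_nonneg (a * q + c.re * s + c.im * r),
      mul_nonneg (sub_nonneg.mpr hc) (add_nonneg (sq_nonneg r) (sq_nonneg s))]

theorem Pex_three_eq : Pex 3 =
    (19 / 25 : ℂ) • 1 + (3 / 5 : ℂ) • Pex 0 - (12 / 25 : ℂ) • Pex 1 - (16 / 25 : ℂ) • Pex 2 := by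
  ext i j
  fin_cases i <;> fin_cases j <;> simp [Pex] <;> ring

theorem trace_mul_Pex_three (ρ : Matrix (Fin 2) (Fin 2) ℂ) :
    (ρ * Pex 3).trace = 19 / 25 * ρ.trace + 3 / 5 * (ρ * Pex 0).trace
      - 12 / 25 * (ρ * Pex 1).trace - 16 / 25 * (ρ * Pex 2).trace := by
  simp only [Pex_three_eq, Matrix.mul_sub, Matrix.mul_add, Matrix.mul_smul, Matrix.mul_one,
    trace_sub, trace_add, trace_smul, smul_eq_mul]

theorem not_exists_trace_mul_Pex_eq_pex :
    ¬ ∃ ρ : Matrix (Fin 2) (Fin 2) ℂ, ρ.trace = 1 ∧ ∀ j, (ρ * Pex j).trace = (pex j : ℂ) := by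
  rintro ⟨ρ, htr, h⟩
  have h3 := trace_mul_Pex_three ρ
  rw [htr, h 0, h 1, h 2, h 3] at h3
  simp [pex] at h3
  norm_num at h3

noncomputable def qubitState (a : ℝ) (c : ℂ) : Matrix (Fin 2) (Fin 2) ℂ :=
  !![(a : ℂ), c; star c, ((1 - a : ℝ) : ℂ)]

theorem qubitState_posSemidef {a : ℝ} {c : ℂ} (ha₀ : 0 ≤ a) (ha₁ : a ≤ 1)
    (hc : Complex.normSq c ≤ a * (1 - a)) : (qubitState a c).PosSemidef :=
  posSemidef_of_normSq_le_mul ha₀ (sub_nonneg.mpr ha₁) hc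

theorem trace_qubitState (a : ℝ) (c : ℂ) : (qubitState a c).trace = 1 := by
  simp [qubitState, trace_fin_two]

theorem trace_qubitState_mul_Pex (a : ℝ) (c : ℂ) (j : Fin 4) :
    (qubitState a c * Pex j).trace =
      (![a, 1 / 2 - c.re, 1 / 2 - c.im, (3 * a + 1) / 5 + (12 * c.re + 16 * c.im) / 25] j : ℝ) := by
  fin_cases j <;> apply Complex.ext <;> simp [qubitState, Pex, trace_fin_two] <;> ring

theorem exists_density_trace_mul_Pex_eq_pex_of_ne (k : Fin 4) :
    ∃ ρ : Matrix (Fin 2) (Fin 2) ℂ, ρ.PosSemidef ∧ ρ.trace = 1 ∧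
      ∀ j ≠ k, (ρ * Pex j).trace = (pex j : ℂ) := by
  suffices ∃ (a : ℝ) (c : ℂ), 0 ≤ a ∧ a ≤ 1 ∧ Complex.normSq c ≤ a * (1 - a) ∧ ∀ j ≠ k,
      ![a, 1 / 2 - c.re, 1 / 2 - c.im, (3 * a + 1) / 5 + (12 * c.re + 16 * c.im) / 25] j = pex j by
    obtain ⟨a, c, ha₀, ha₁, hc, h⟩ := this
    refine ⟨qubitState a c, qubitState_posSemidef ha₀ ha₁ hc, trace_qubitState a c, ?_⟩
    intro j hj
    rw [trace_qubitState_mul_Pex, h j hj]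
  fin_cases k
    <;> [use 97 / 240, ⟨1 / 12, 1 / 8⟩; use 1 / 2, ⟨-7 / 192, 1 / 8⟩;
      use 1 / 2, ⟨1 / 12, 9 / 256⟩; use 1 / 2, ⟨1 / 12, 1 / 8⟩]
  all_goals
    refine ⟨by norm_num, by norm_num, by norm_num [Complex.normSq_apply], fun j hj => ?_⟩
    fin_cases j <;> simp [pex] at hj ⊢ <;> norm_num

/-- Any three of the four probability assignments on the bases `{Pʲ, I − Pʲ}` of `ℂ²`
are realized by a density matrix, but no density matrix realizes all four
simultaneously. -/
theorem dim_two_three_consistent_four_not :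
    (∀ S : Finset (Fin 4), S.card = 3 →
      ∃ ρ : Matrix (Fin 2) (Fin 2) ℂ, ρ.PosSemidef ∧ ρ.trace = 1 ∧
        ∀ j ∈ S, (ρ * Pex j).trace = (pex j : ℂ)) ∧
    ¬ ∃ ρ : Matrix (Fin 2) (Fin 2) ℂ, ρ.PosSemidef ∧ ρ.trace = 1 ∧
        ∀ j, (ρ * Pex j).trace = (pex j : ℂ) := by
  refine ⟨fun S hS => ?_, fun ⟨ρ, _, htr, h⟩ => not_exists_trace_mul_Pex_eq_pex ⟨ρ, htr, h⟩⟩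
  obtain ⟨k, -, hk⟩ := Finset.exists_mem_notMem_of_card_lt_card (s := S) (t := Finset.univ)
    (by simp [hS])
  obtain ⟨ρ, hpsd, htr, h⟩ := exists_density_trace_mul_Pex_eq_pex_of_ne k
  exact ⟨ρ, hpsd, htr, fun j hj => h j (ne_of_mem_of_not_mem hj hk)⟩
end

section
/- Let n ≥ 2 and let e_1, …, e_n be the standard basis of ℂⁿ. Define the n² − n + 1 orthonormal bases: B_0 with projections e_i e_i^† (i = 1, …, n); for each pair i < j the basis B_{ij} with projections (1/2)(e_i + e_j)(e_i + e_j)^†, (1/2)(e_i − e_j)(e_i − e_j)^†, and e_k e_k^† for k ≠ i, j; and for each pair i < j the basis B′_{ij} with projections (1/2)(e_i + i·e_j)(e_i + i·e_j)^†, (1/2)(e_i − i·e_j)(e_i − i·e_j)^†, and e_k e_k^† for k ≠ i, j. If ρ and σ are Hermitian n×n complex matrices with tr(ρ) = tr(σ) and tr(ρ P) = tr(σ P) for every projection P belonging to any of these bases, then ρ = σ. In particular, a density matrix is uniquely determined by its measurement probabilities in these n² − n + 1 bases. -/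
open Matrix

/-- The standard basis vector `e_i` of `ℂⁿ`. -/
def stdVec {n : ℕ} (i : Fin n) : Fin n → ℂ := Pi.single i 1

/-- The rank-one orthogonal projection `v v^†` onto the line spanned by the unit
vector `v`; for a general vector `w` of norm `√2` the projection onto its line is
`(1/2) w w^†`, which is how the basis projections below are written. -/
def outer {n : ℕ} (v : Fin n → ℂ) : Matrix (Fin n) (Fin n) ℂ :=
  Matrix.vecMulVec v (star v)

/-! `tr(A (e_i + c e_j)(e_i + c e_j)^†) = A_ii + c A_ij + c̄ A_ji + |c|² A_jj`. The diagonal is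
read off from `B₀`, so taking `c = 1` and `c = i` recovers `A_ij + A_ji` and `i (A_ij − A_ji)`,
hence both off-diagonal entries. -/

lemma trace_mul_outer {n : ℕ} (A : Matrix (Fin n) (Fin n) ℂ) (v : Fin n → ℂ) :
    (A * outer v).trace = star v ⬝ᵥ A *ᵥ v := by
  rw [outer, mul_vecMulVec, trace_vecMulVec, dotProduct_comm]

lemma star_stdVec_dotProduct_mulVec_stdVec {n : ℕ} (A : Matrix (Fin n) (Fin n) ℂ)
    (i j : Fin n) : star (stdVec i) ⬝ᵥ A *ᵥ stdVec j = A i j := by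
  simp [stdVec, mulVec_single, single_dotProduct]

lemma trace_mul_outer_stdVec {n : ℕ} (A : Matrix (Fin n) (Fin n) ℂ) (i : Fin n) :
    (A * outer (stdVec i)).trace = A i i := by
  rw [trace_mul_outer, star_stdVec_dotProduct_mulVec_stdVec]

lemma trace_mul_outer_stdVec_add_smul {n : ℕ} (A : Matrix (Fin n) (Fin n) ℂ) (i j : Fin n)
    (c : ℂ) :
    (A * outer (stdVec i + c • stdVec j)).trace =
      A i i + c * A i j + star c * A j i + star c * c * A j j := by
  simp only [trace_mul_outer, star_add, star_smul, mulVec_add, mulVec_smul, add_dotProduct,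
    dotProduct_add, smul_dotProduct, dotProduct_smul, star_stdVec_dotProduct_mulVec_stdVec,
    smul_eq_mul]
  ring

lemma off_diag_combination_eq {n : ℕ} {ρ σ : Matrix (Fin n) (Fin n) ℂ} {i j : Fin n} (c : ℂ)
    (hii : ρ i i = σ i i) (hjj : ρ j j = σ j j)
    (h : (ρ * ((1 / 2 : ℂ) • outer (stdVec i + c • stdVec j))).trace =
      (σ * ((1 / 2 : ℂ) • outer (stdVec i + c • stdVec j))).trace) :
    c * ρ i j + star c * ρ j i = c * σ i j + star c * σ j i := by
  simp only [Matrix.mul_smul, trace_smul, trace_mul_outer_stdVec_add_smul, smul_eq_mul, hii,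
    hjj] at h
  linear_combination 2 * h

lemma off_diag_eq_of_trace_eq {n : ℕ} {ρ σ : Matrix (Fin n) (Fin n) ℂ} {i j : Fin n}
    (hii : ρ i i = σ i i) (hjj : ρ j j = σ j j)
    (hre : (ρ * ((1 / 2 : ℂ) • outer (stdVec i + stdVec j))).trace =
      (σ * ((1 / 2 : ℂ) • outer (stdVec i + stdVec j))).trace)
    (him : (ρ * ((1 / 2 : ℂ) • outer (stdVec i + Complex.I • stdVec j))).trace =
      (σ * ((1 / 2 : ℂ) • outer (stdVec i + Complex.I • stdVec j))).trace) :
    ρ i j = σ i j ∧ ρ j i = σ j i := by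
  have hsum := off_diag_combination_eq 1 hii hjj (by simpa only [one_smul] using hre)
  have hdiff := off_diag_combination_eq Complex.I hii hjj him
  simp only [one_mul, star_one, Complex.star_def, Complex.conj_I] at hsum hdiff
  constructor
  · linear_combination (hsum - Complex.I * hdiff) / 2 +
      (ρ i j - σ i j + σ j i - ρ j i) / 2 * Complex.I_sq
  · linear_combination (hsum + Complex.I * hdiff) / 2 +
      (ρ j i - σ j i + σ i j - ρ i j) / 2 * Complex.I_sq

theorem hermitian_determined_by_tomographic_bases_general {n : ℕ}
    (ρ σ : Matrix (Fin n) (Fin n) ℂ)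
    (hdiag : ∀ i : Fin n,
      (ρ * outer (stdVec i)).trace = (σ * outer (stdVec i)).trace)
    (hre : ∀ i j : Fin n, i < j →
      (ρ * ((1 / 2 : ℂ) • outer (stdVec i + stdVec j))).trace =
        (σ * ((1 / 2 : ℂ) • outer (stdVec i + stdVec j))).trace ∧
      (ρ * ((1 / 2 : ℂ) • outer (stdVec i - stdVec j))).trace =
        (σ * ((1 / 2 : ℂ) • outer (stdVec i - stdVec j))).trace)
    (him : ∀ i j : Fin n, i < j →
      (ρ * ((1 / 2 : ℂ) • outer (stdVec i + Complex.I • stdVec j))).trace =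
        (σ * ((1 / 2 : ℂ) • outer (stdVec i + Complex.I • stdVec j))).trace ∧
      (ρ * ((1 / 2 : ℂ) • outer (stdVec i - Complex.I • stdVec j))).trace =
        (σ * ((1 / 2 : ℂ) • outer (stdVec i - Complex.I • stdVec j))).trace) :
    ρ = σ := by
  have hd (k : Fin n) : ρ k k = σ k k := by
    simpa only [trace_mul_outer_stdVec] using hdiag k
  have hoff {i j : Fin n} (hij : i < j) : ρ i j = σ i j ∧ ρ j i = σ j i :=
    off_diag_eq_of_trace_eq (hd i) (hd j) (hre i j hij).1 (him i j hij).1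
  ext i j
  rcases lt_trichotomy i j with hij | rfl | hji
  · exact (hoff hij).1
  · exact hd i
  · exact (hoff hji).2

/-- A Hermitian matrix with given trace is determined by its measurement probabilities
in the `n² − n + 1` bases `B₀` (the standard basis projections `e_i e_i^†`), `B_{ij}`
(projections `(1/2)(e_i ± e_j)(e_i ± e_j)^†` together with `e_k e_k^†`, `k ≠ i, j`) and
`B′_{ij}` (projections `(1/2)(e_i ± i·e_j)(e_i ± i·e_j)^†` together with `e_k e_k^†`,
`k ≠ i, j`). -/
theorem hermitian_determined_by_tomographic_bases {n : ℕ} (hn : 2 ≤ n)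
    (ρ σ : Matrix (Fin n) (Fin n) ℂ)
    (hρ : ρ.IsHermitian) (hσ : σ.IsHermitian)
    (htr : ρ.trace = σ.trace)
    (hdiag : ∀ i : Fin n,
      (ρ * outer (stdVec i)).trace = (σ * outer (stdVec i)).trace)
    (hre : ∀ i j : Fin n, i < j →
      (ρ * ((1 / 2 : ℂ) • outer (stdVec i + stdVec j))).trace =
        (σ * ((1 / 2 : ℂ) • outer (stdVec i + stdVec j))).trace ∧
      (ρ * ((1 / 2 : ℂ) • outer (stdVec i - stdVec j))).trace =
        (σ * ((1 / 2 : ℂ) • outer (stdVec i - stdVec j))).trace)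
    (him : ∀ i j : Fin n, i < j →
      (ρ * ((1 / 2 : ℂ) • outer (stdVec i + Complex.I • stdVec j))).trace =
        (σ * ((1 / 2 : ℂ) • outer (stdVec i + Complex.I • stdVec j))).trace ∧
      (ρ * ((1 / 2 : ℂ) • outer (stdVec i - Complex.I • stdVec j))).trace =
        (σ * ((1 / 2 : ℂ) • outer (stdVec i - Complex.I • stdVec j))).trace) :
    ρ = σ :=
  hermitian_determined_by_tomographic_bases_general ρ σ hdiag hre him
end
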